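/- arXiv:1404.6553 — 14 statements merged into one kernel-verified Lean document; each statement's English description precedes it below -/
import Mathlib

section
/- Suppose f : I → ℝ is continuous and the discriminant condition (∗) holds with n = −1, i.e. for all u ∈ I and v ∈ ℝ: f(u)²·(v² + δ(u)²) + f(u)·(k(u)v² + δ'(u)v + δ(u)²(k(u)+λ(u))) − δ(u)² = 0. Then f(u) = −k(u), δ'(u) = 0 and k(u)λ(u) + 1 = 0 for all u ∈ I; in particular Φ is an Edlinger surface. -/
/-- if the discriminant condition (∗) holds with `n = -1`, i.e.
`f(u)² (v² + δ(u)²) + f(u)(k(u)v² + δ'(u)v + δ(u)²(k(u)+λ(u))) − δ(u)² = 0`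
for all `u ∈ I`, `v ∈ ℝ`, then `f = -k`, `δ' ≡ 0` and `kλ + 1 ≡ 0` on `I`;
in particular `Φ` is an Edlinger surface. -/
theorem principal_curvature_case_n_neg_one
    (I : Set ℝ) (hIopen : IsOpen I) (hIconn : I.OrdConnected)
    (k δ δ' lam : ℝ → ℝ)
    (hk : ContinuousOn k I)
    (hδdiff : ∀ u ∈ I, HasDerivAt δ (δ' u) u)
    (hδ'cont : ContinuousOn δ' I)
    (hδ0 : ∀ u ∈ I, δ u ≠ 0)
    (hlam : ContinuousOn lam I)
    (f : ℝ → ℝ) (hf : ContinuousOn f I)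
    (hdisc : ∀ u ∈ I, ∀ v : ℝ,
      f u ^ 2 * (v ^ 2 + δ u ^ 2) +
        f u * (k u * v ^ 2 + δ' u * v + δ u ^ 2 * (k u + lam u)) - δ u ^ 2 = 0) :
    ∀ u ∈ I, f u = -k u ∧ δ' u = 0 ∧ k u * lam u + 1 = 0 := by
  intro u hu
  have h0 := hdisc u hu 0
  have h1 := hdisc u hu 1
  have hm1 := hdisc u hu (-1)
  have hδ := hδ0 u hu
  have hδsq : δ u ^ 2 ≠ 0 := pow_ne_zero _ hδ
  -- f u ≠ 0
  have hf0 : f u ≠ 0 := by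
    intro h
    rw [h] at h0
    simp at h0
    exact hδ h0
  -- coefficient of v: f * δ' = 0
  have hcoef1 : f u * δ' u = 0 := by nlinarith [h1, hm1]
  have hd' : δ' u = 0 := by
    rcases mul_eq_zero.mp hcoef1 with h | h
    · exact absurd h hf0
    · exact h
  -- coefficient of v²: f² + f k = 0
  have hcoef2 : f u ^ 2 + f u * k u = 0 := by nlinarith [h1, hm1, h0]
  have hfk : f u = -k u := by
    have : f u * (f u + k u) = 0 := by ring_nf; linarith [hcoef2]
    rcases mul_eq_zero.mp this with h | h
    · exact absurd h hf0
    · linarith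
  refine ⟨hfk, hd', ?_⟩
  -- constant: f² δ² + f δ² (k + lam) - δ² = 0, with f = -k
  rw [hfk] at h0
  have : δ u ^ 2 * (k u * lam u + 1) = 0 := by linear_combination -h0
  rcases mul_eq_zero.mp this with h | h
  · exact absurd h hδsq
  · exact h
end

section
/- Suppose f : I → ℝ is continuous and the discriminant condition (∗) holds with n = −2, i.e. for all u ∈ I and v ∈ ℝ: f(u)² + f(u)·(k(u)v² + δ'(u)v + δ(u)²(k(u)+λ(u)))·w(u,v)^{−1} − δ(u)² = 0. Then k(u) = 0, δ'(u) = 0, λ(u) = 0 and f(u)² = δ(u)² for all u ∈ I; in particular Φ is a helicoid. -/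
/-- if the discriminant condition (∗) holds with `n = -2`, i.e.
`f(u)² + f(u)(k(u)v² + δ'(u)v + δ(u)²(k(u)+λ(u))) w(u,v)⁻¹ − δ(u)² = 0`
for all `u ∈ I`, `v ∈ ℝ` (where `w u v = √(v² + δ u²)`), then
`k ≡ δ' ≡ λ ≡ 0` and `f² = δ²` on `I`; in particular `Φ` is a helicoid. -/
theorem principal_curvature_case_n_neg_two
    (I : Set ℝ) (hIopen : IsOpen I) (hIconn : I.OrdConnected)
    (k δ δ' lam : ℝ → ℝ)
    (hk : ContinuousOn k I)
    (hδdiff : ∀ u ∈ I, HasDerivAt δ (δ' u) u)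
    (hδ'cont : ContinuousOn δ' I)
    (hδ0 : ∀ u ∈ I, δ u ≠ 0)
    (hlam : ContinuousOn lam I)
    (f : ℝ → ℝ) (hf : ContinuousOn f I)
    (hdisc : ∀ u ∈ I, ∀ v : ℝ,
      f u ^ 2 +
        f u * (k u * v ^ 2 + δ' u * v + δ u ^ 2 * (k u + lam u)) *
          Real.sqrt (v ^ 2 + δ u ^ 2) ^ (-1 : ℤ) - δ u ^ 2 = 0) :
    ∀ u ∈ I, k u = 0 ∧ δ' u = 0 ∧ lam u = 0 ∧ f u ^ 2 = δ u ^ 2 := by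
  intro u hu
  have hδne := hδ0 u hu
  have hd : (0:ℝ) < δ u ^ 2 := by positivity
  have hw : ∀ v : ℝ, 0 < Real.sqrt (v ^ 2 + δ u ^ 2) := fun v =>
    Real.sqrt_pos.2 (by positivity)
  -- f u ≠ 0
  have hf0 : f u ≠ 0 := by
    intro h
    have h0 := hdisc u hu 0
    rw [h] at h0
    nlinarith [h0]
  -- key equation
  have E : ∀ v : ℝ,
      f u * (k u * v ^ 2 + δ' u * v + δ u ^ 2 * (k u + lam u)) =
        (δ u ^ 2 - f u ^ 2) * Real.sqrt (v ^ 2 + δ u ^ 2) := by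
    intro v
    have h := hdisc u hu v
    have hwv := (hw v).ne'
    rw [zpow_neg_one] at h
    field_simp at h
    nlinarith [h]
  -- squared equation
  have Esq : ∀ v : ℝ,
      (f u * (k u * v ^ 2 + δ' u * v + δ u ^ 2 * (k u + lam u))) ^ 2 =
        (δ u ^ 2 - f u ^ 2) ^ 2 * (v ^ 2 + δ u ^ 2) := by
    intro v
    have h2 := congrArg (· ^ 2) (E v)
    simp only [mul_pow] at h2
    rw [Real.sq_sqrt (by positivity)] at h2
    linarith [h2]
  -- δ' u = 0
  have hb : δ' u = 0 := by
    have h1 := E 1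
    have h2 := E (-1)
    norm_num at h1 h2
    have : f u * (2 * δ' u) = 0 := by nlinarith [h1, h2]
    rcases mul_eq_zero.1 this with h | h
    · exact absurd h hf0
    · linarith
  -- k u = 0
  have ha : k u = 0 := by
    have h0 := Esq 0
    have h1 := Esq 1
    have h2 := Esq 2
    rw [hb] at h0 h1 h2
    have h12 : 12 * (f u ^ 2 * k u ^ 2) = 0 := by nlinarith [h0, h1, h2]
    have : f u ^ 2 * k u ^ 2 = 0 := by linarith
    rcases mul_eq_zero.1 this with h | h
    · exact absurd (pow_eq_zero_iff two_ne_zero |>.1 h) hf0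
    · exact pow_eq_zero_iff two_ne_zero |>.1 h
  -- c = 0
  have hc : δ u ^ 2 - f u ^ 2 = 0 := by
    have h0 := Esq 0
    have h1 := Esq 1
    rw [hb, ha] at h0 h1
    have : (δ u ^ 2 - f u ^ 2) ^ 2 = 0 := by nlinarith [h0, h1]
    exact pow_eq_zero_iff two_ne_zero |>.1 this
  -- lam u = 0
  have hA : lam u = 0 := by
    have h0 := E 0
    rw [hb, ha, hc] at h0
    norm_num at h0
    rcases h0 with h | h | h
    · exact absurd h hf0
    · exact absurd h hδne
    · exact h
  exact ⟨ha, hb, hA, by linarith⟩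
end

section
/- Suppose f : I → ℝ is continuous and the discriminant condition (∗) holds with n = −3, i.e. for all u ∈ I and v ∈ ℝ: f(u)²·w(u,v)^{−2} + f(u)·(k(u)v² + δ'(u)v + δ(u)²(k(u)+λ(u)))·w(u,v)^{−2} − δ(u)² = 0. Then for all u ∈ I: k(u) ≠ 0, f(u) = δ(u)²/k(u), δ'(u) = 0 and k(u)λ(u) + 1 = 0; in particular Φ is an Edlinger surface. -/
/-- if the discriminant condition (∗) holds with `n = -3`, i.e.
`f(u)² w(u,v)⁻² + f(u)(k(u)v² + δ'(u)v + δ(u)²(k(u)+λ(u))) w(u,v)⁻² − δ(u)² = 0`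
for all `u ∈ I`, `v ∈ ℝ` (where `w u v = √(v² + δ u²)`), then for all `u ∈ I`:
`k(u) ≠ 0`, `f(u) = δ(u)²/k(u)`, `δ'(u) = 0` and `k(u)λ(u) + 1 = 0`;
in particular `Φ` is an Edlinger surface. -/
theorem principal_curvature_case_n_neg_three
    (I : Set ℝ) (hIopen : IsOpen I) (hIconn : I.OrdConnected)
    (k δ δ' lam : ℝ → ℝ)
    (hk : ContinuousOn k I)
    (hδdiff : ∀ u ∈ I, HasDerivAt δ (δ' u) u)
    (hδ'cont : ContinuousOn δ' I)
    (hδ0 : ∀ u ∈ I, δ u ≠ 0)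
    (hlam : ContinuousOn lam I)
    (f : ℝ → ℝ) (hf : ContinuousOn f I)
    (hdisc : ∀ u ∈ I, ∀ v : ℝ,
      f u ^ 2 * Real.sqrt (v ^ 2 + δ u ^ 2) ^ (-2 : ℤ) +
        f u * (k u * v ^ 2 + δ' u * v + δ u ^ 2 * (k u + lam u)) *
          Real.sqrt (v ^ 2 + δ u ^ 2) ^ (-2 : ℤ) - δ u ^ 2 = 0) :
    ∀ u ∈ I, k u ≠ 0 ∧ f u = δ u ^ 2 / k u ∧ δ' u = 0 ∧ k u * lam u + 1 = 0 := by

  intro u hu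
  have hδ := hδ0 u hu
  have key : ∀ v : ℝ,
      f u ^ 2 + f u * (k u * v ^ 2 + δ' u * v + δ u ^ 2 * (k u + lam u))
        - δ u ^ 2 * (v ^ 2 + δ u ^ 2) = 0 := by
    intro v
    have hS : (0:ℝ) < v ^ 2 + δ u ^ 2 := by positivity
    have hw : Real.sqrt (v ^ 2 + δ u ^ 2) ^ (-2 : ℤ) = (v ^ 2 + δ u ^ 2)⁻¹ := by
      rw [zpow_neg, zpow_two, Real.mul_self_sqrt hS.le]
    have h := hdisc u hu v
    rw [hw] at h
    field_simp at h
    linarith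
  have h0 := key 0
  have h1 := key 1
  have h2 := key (-1)
  have hA : f u * k u = δ u ^ 2 := by nlinarith [h1, h2, h0]
  have hB : f u * δ' u = 0 := by nlinarith [h1, h2]
  have hfne : f u ≠ 0 := by
    intro h
    rw [h] at hA
    exact hδ (by nlinarith)
  have hkne : k u ≠ 0 := by
    intro h
    rw [h] at hA
    exact hδ (by nlinarith)
  have hfeq : f u = δ u ^ 2 / k u := by field_simp; linarith [hA]
  have hδ' : δ' u = 0 := by
    rcases mul_eq_zero.mp hB with h | h
    · exact absurd h hfne
    · exact h
  refine ⟨hkne, hfeq, hδ', ?_⟩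
  have hδsq : δ u ^ 2 ≠ 0 := pow_ne_zero 2 hδ
  -- from h0 : f² + f δ² (k+lam) - δ⁴ = 0, f = δ²/k
  have : δ u ^ 2 * δ u ^ 2 * (k u * lam u + 1) = 0 := by
    linear_combination k u ^ 2 * h0
      - (f u * k u + δ u ^ 2 + k u * δ u ^ 2 * (k u + lam u)) * hA
  have := mul_eq_zero.mp this
  rcases this with h | h
  · exact absurd h (mul_ne_zero hδsq hδsq)
  · exact h
end

section
/- For every integer n ≥ 0 there is no continuous function f : I → ℝ satisfying the discriminant condition (∗) for all u ∈ I and v ∈ ℝ; i.e. no principal curvature of Φ has the form f(u)·w(u,v)ⁿ with n ≥ 0. -/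
/-- for every integer `n ≥ 0` there is no continuous `f : I → ℝ`
satisfying the discriminant condition (∗); i.e. no principal curvature of `Φ`
has the form `f(u) w(u,v)ⁿ` with `n ≥ 0` (here `w u v = √(v² + δ u²)`). -/
theorem no_principal_curvature_n_nonneg
    (I : Set ℝ) (hIopen : IsOpen I) (hIconn : I.OrdConnected)
    (hIne : I.Nonempty)
    (k δ δ' lam : ℝ → ℝ)
    (hk : ContinuousOn k I)
    (hδdiff : ∀ u ∈ I, HasDerivAt δ (δ' u) u)
    (hδ'cont : ContinuousOn δ' I)
    (hδ0 : ∀ u ∈ I, δ u ≠ 0)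
    (hlam : ContinuousOn lam I)
    (n : ℤ) (hn : 0 ≤ n) :
    ¬ ∃ f : ℝ → ℝ, ContinuousOn f I ∧
      ∀ u ∈ I, ∀ v : ℝ,
        f u ^ 2 * Real.sqrt (v ^ 2 + δ u ^ 2) ^ (2 * n + 4) +
          f u * (k u * v ^ 2 + δ' u * v + δ u ^ 2 * (k u + lam u)) *
            Real.sqrt (v ^ 2 + δ u ^ 2) ^ (n + 1) - δ u ^ 2 = 0 := by
  rintro ⟨f, hfc, hf⟩
  obtain ⟨u, hu⟩ := hIne
  have hδu : δ u ≠ 0 := hδ0 u hu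
  have hδ2 : (0:ℝ) < δ u ^ 2 := by positivity
  -- f u ≠ 0 (evaluate at v = 0)
  have hfu : f u ≠ 0 := by
    intro h0
    have h := hf u hu 0
    rw [h0] at h
    simp at h
    nlinarith
  set F := |f u| with hF
  have hF0 : 0 < F := abs_pos.mpr hfu
  have hF2 : (0:ℝ) < F ^ 2 := by positivity
  set c := δ u ^ 2 * (k u + lam u) with hc
  set M := δ u ^ 2 + F * |k u| + F * |δ' u| + F * |c| with hM
  have hM0 : 0 ≤ M := by positivity
  set v : ℝ := max 1 (M / F ^ 2 + 1) with hv
  have hv1 : (1:ℝ) ≤ v := le_max_left _ _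
  have hv0 : (0:ℝ) < v := lt_of_lt_of_le one_pos hv1
  have hvM : M < F ^ 2 * v := by
    have h1 : M / F ^ 2 + 1 ≤ v := le_max_right _ _
    have h2 : M / F ^ 2 ≤ v - 1 := by linarith
    have h3 : M ≤ (v - 1) * F ^ 2 := (div_le_iff₀ hF2).mp h2
    nlinarith
  set w : ℝ := Real.sqrt (v ^ 2 + δ u ^ 2) with hw
  have hwv : v ≤ w := by
    have h1 : v ^ 2 ≤ v ^ 2 + δ u ^ 2 := by linarith
    calc v = Real.sqrt (v ^ 2) := (Real.sqrt_sq hv0.le).symm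
    _ ≤ w := Real.sqrt_le_sqrt h1
  have hw1 : (1:ℝ) ≤ w := hv1.trans hwv
  have hw0 : (0:ℝ) < w := lt_of_lt_of_le one_pos hw1
  have hwn1 : (1:ℝ) ≤ w ^ (n + 1) := one_le_zpow₀ hw1 (by linarith)
  have hwn0 : (0:ℝ) < w ^ (n + 1) := zpow_pos hw0 _
  set P := k u * v ^ 2 + δ' u * v + c with hP
  have key : f u ^ 2 * w ^ (2 * n + 4) + f u * P * w ^ (n + 1) - δ u ^ 2 = 0 :=
    hf u hu v
  -- bound on |P|
  set B := |k u| * v ^ 2 + |δ' u| * v + |c| with hB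
  have hPb : |P| ≤ B := by
    have h1 : |P| ≤ |k u * v ^ 2 + δ' u * v| + |c| := abs_add_le _ _
    have h2 : |k u * v ^ 2 + δ' u * v| ≤ |k u * v ^ 2| + |δ' u * v| := abs_add_le _ _
    have h3 : |k u * v ^ 2| = |k u| * v ^ 2 := by
      rw [abs_mul, abs_of_nonneg (by positivity : (0:ℝ) ≤ v ^ 2)]
    have h4 : |δ' u * v| = |δ' u| * v := by
      rw [abs_mul, abs_of_nonneg hv0.le]
    rw [hB]; linarith
  have hB0 : 0 ≤ B := le_trans (abs_nonneg P) hPb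
  -- upper bound for f u ^ 2 * w ^ (2n+4)
  have hup : f u ^ 2 * w ^ (2 * n + 4) ≤ δ u ^ 2 + F * B * w ^ (n + 1) := by
    have h1 : -(f u * P * w ^ (n + 1)) ≤ F * B * w ^ (n + 1) := by
      have h2 : |f u * P * w ^ (n + 1)| = F * |P| * w ^ (n + 1) := by
        rw [abs_mul, abs_mul, abs_of_pos hwn0]
      have h3 : -(f u * P * w ^ (n + 1)) ≤ |f u * P * w ^ (n + 1)| :=
        neg_le_abs _
      have h4 : F * |P| * w ^ (n + 1) ≤ F * B * w ^ (n + 1) := by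
        have := mul_le_mul_of_nonneg_left hPb hF0.le
        exact mul_le_mul_of_nonneg_right this hwn0.le
      linarith [h3, h2 ▸ h3]
    linarith
  -- lower bound
  have hsplit : w ^ (2 * n + 4) = w ^ (n + 3) * w ^ (n + 1) := by
    rw [← zpow_add₀ hw0.ne']; ring_nf
  have hmid : v ^ 3 ≤ w ^ (n + 3) := by
    have h1 : w ^ (3:ℤ) ≤ w ^ (n + 3) := zpow_le_zpow_right₀ hw1 (by linarith)
    have h2 : v ^ (3:ℕ) ≤ w ^ (3:ℕ) := pow_le_pow_left₀ hv0.le hwv 3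
    calc v ^ 3 ≤ w ^ (3:ℕ) := h2
    _ = w ^ (3:ℤ) := (zpow_natCast w 3).symm
    _ ≤ w ^ (n + 3) := h1
  have hlow : F ^ 2 * v ^ 3 * w ^ (n + 1) ≤ f u ^ 2 * w ^ (2 * n + 4) := by
    rw [hsplit]
    have hsq : f u ^ 2 = F ^ 2 := (sq_abs _).symm
    rw [hsq, ← mul_assoc]
    have h1 : F ^ 2 * v ^ 3 ≤ F ^ 2 * w ^ (n + 3) :=
      mul_le_mul_of_nonneg_left hmid hF2.le
    exact mul_le_mul_of_nonneg_right h1 hwn0.le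
  -- combine and divide by w ^ (n+1)
  have hcomb : F ^ 2 * v ^ 3 ≤ δ u ^ 2 + F * B := by
    have h1 : F ^ 2 * v ^ 3 * w ^ (n + 1) ≤ (δ u ^ 2 + F * B) * w ^ (n + 1) := by
      have h2 : δ u ^ 2 ≤ δ u ^ 2 * w ^ (n + 1) := by nlinarith
      calc F ^ 2 * v ^ 3 * w ^ (n + 1) ≤ δ u ^ 2 + F * B * w ^ (n + 1) :=
            hlow.trans hup
      _ ≤ δ u ^ 2 * w ^ (n + 1) + F * B * w ^ (n + 1) := by linarith
      _ = (δ u ^ 2 + F * B) * w ^ (n + 1) := by ring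
    exact le_of_mul_le_mul_right h1 hwn0
  -- now derive a contradiction purely algebraically
  have hvv : v ≤ v ^ 2 := by
    calc v = 1 * v := (one_mul v).symm
    _ ≤ v * v := mul_le_mul_of_nonneg_right hv1 hv0.le
    _ = v ^ 2 := (sq v).symm
  have hv2 : (1:ℝ) ≤ v ^ 2 := hv1.trans hvv
  have e1 : F * |δ' u| * v ≤ F * |δ' u| * v ^ 2 :=
    mul_le_mul_of_nonneg_left hvv (mul_nonneg hF0.le (abs_nonneg _))
  have e2 : F * |c| ≤ F * |c| * v ^ 2 :=
    le_mul_of_one_le_right (mul_nonneg hF0.le (abs_nonneg _)) hv2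
  have e3 : δ u ^ 2 ≤ δ u ^ 2 * v ^ 2 := le_mul_of_one_le_right hδ2.le hv2
  have hMv : F ^ 2 * v ^ 3 ≤ M * v ^ 2 := by
    have hMexp : M * v ^ 2 =
        δ u ^ 2 * v ^ 2 + F * |k u| * v ^ 2 + F * |δ' u| * v ^ 2 + F * |c| * v ^ 2 := by
      rw [hM]; ring
    have hBexp : F * B = F * |k u| * v ^ 2 + F * |δ' u| * v + F * |c| := by
      rw [hB]; ring
    linarith [hcomb, e1, e2, e3, hMexp, hBexp]
  have hfin : M * v ^ 2 < F ^ 2 * v ^ 3 := by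
    have h := mul_lt_mul_of_pos_right hvM (by positivity : (0:ℝ) < v ^ 2)
    calc M * v ^ 2 < F ^ 2 * v * v ^ 2 := h
    _ = F ^ 2 * v ^ 3 := by ring
  linarith [hMv, hfin]
end

section
/- For every integer n ≤ −4 there is no continuous function f : I → ℝ satisfying the discriminant condition (∗) for all u ∈ I and v ∈ ℝ; i.e. no principal curvature of Φ has the form f(u)·w(u,v)ⁿ with n ≤ −4. -/
/-!
Fix a point `u` of `I` and write `w = √(v² + δ(u)²)`, so that `|v| ≤ w` and `w → ∞` as `v → ∞`.
The coefficient `k v² + δ' v + δ² (k + λ)` grows at most like `w²`, so for `n ≤ -4` the two terms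
`f² w^(2n+4)` and `f · (…) · w^(n+1)` are both `O(w⁻¹)`: the exponents `2n + 4` and `n + 3` are
at most `-1`. Hence the left side of (∗) tends to `-δ(u)² ≠ 0` and cannot vanish for all `v`.
-/

open Filter

theorem abs_quadratic_le_mul_sq {a b c v w : ℝ} (hv : |v| ≤ w) (hw : 1 ≤ w) :
    |a * v ^ 2 + b * v + c| ≤ (|a| + |b| + |c|) * w ^ 2 := by
  have hv_sq : v ^ 2 ≤ w ^ 2 := sq_le_sq' (abs_le.mp hv).1 (abs_le.mp hv).2
  have hv_abs : |v| ≤ w ^ 2 := hv.trans (by nlinarith)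
  have hw_sq : 1 ≤ w ^ 2 := by nlinarith
  calc |a * v ^ 2 + b * v + c| ≤ |a| * v ^ 2 + |b| * |v| + |c| := by
        refine (abs_add_le _ _).trans (add_le_add_left ((abs_add_le _ _).trans_eq ?_) _)
        rw [abs_mul, abs_mul, abs_of_nonneg (sq_nonneg v)]
    _ ≤ |a| * w ^ 2 + |b| * w ^ 2 + |c| * w ^ 2 := by
        gcongr; exact le_mul_of_one_le_right (abs_nonneg c) hw_sq
    _ = (|a| + |b| + |c|) * w ^ 2 := by ring

theorem zpow_le_inv_of_le_neg_one {𝕜 : Type*} [Semifield 𝕜] [LinearOrder 𝕜]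
    [IsStrictOrderedRing 𝕜] {w : 𝕜} {m : ℤ} (hw : 1 ≤ w) (hm : m ≤ -1) : w ^ m ≤ w⁻¹ :=
  (zpow_le_zpow_right₀ hw hm).trans_eq (zpow_neg_one w)

theorem sq_mul_zpow_add_mul_zpow_le_div {a q A w : ℝ} {n : ℤ} (hn : n ≤ -4) (hw : 1 ≤ w)
    (hq : |q| ≤ A * w ^ 2) :
    a ^ 2 * w ^ (2 * n + 4) + a * q * w ^ (n + 1) ≤ (a ^ 2 + |a| * A) / w := by
  have hw₀ : 0 < w := one_pos.trans_le hw
  have h_first : a ^ 2 * w ^ (2 * n + 4) ≤ a ^ 2 * w⁻¹ :=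
    mul_le_mul_of_nonneg_left (zpow_le_inv_of_le_neg_one hw (by omega)) (sq_nonneg a)
  have h_second : a * q * w ^ (n + 1) ≤ |a| * A * w⁻¹ :=
    calc a * q * w ^ (n + 1) ≤ |a| * |q| * w ^ (n + 1) := by
          rw [← abs_mul]; exact mul_le_mul_of_nonneg_right (le_abs_self _) (zpow_pos hw₀ _).le
      _ ≤ |a| * (A * w ^ 2) * w ^ (n + 1) := by gcongr
      _ = |a| * A * w ^ (n + 3) := by
          rw [show n + 3 = 2 + (n + 1) by ring, zpow_add₀ hw₀.ne' 2, zpow_ofNat]; ring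
      _ ≤ |a| * A * w⁻¹ := by
          have hA : 0 ≤ A := nonneg_of_mul_nonneg_left ((abs_nonneg q).trans hq) (by positivity)
          gcongr
          exact zpow_le_inv_of_le_neg_one hw (by omega)
  rw [div_eq_mul_inv, add_mul]
  exact add_le_add h_first h_second

theorem no_principal_curvature_n_le_neg_four_general
    (I : Set ℝ)
    (hIne : I.Nonempty)
    (k δ δ' lam : ℝ → ℝ)
    (hδ0 : ∀ u ∈ I, δ u ≠ 0)
    (n : ℤ) (hn : n ≤ -4) :
    ¬ ∃ f : ℝ → ℝ, ContinuousOn f I ∧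
      ∀ u ∈ I, ∀ v : ℝ,
        f u ^ 2 * Real.sqrt (v ^ 2 + δ u ^ 2) ^ (2 * n + 4) +
          f u * (k u * v ^ 2 + δ' u * v + δ u ^ 2 * (k u + lam u)) *
            Real.sqrt (v ^ 2 + δ u ^ 2) ^ (n + 1) - δ u ^ 2 = 0 := by
  rintro ⟨f, -, hf⟩
  obtain ⟨u, hu⟩ := hIne
  set w : ℝ → ℝ := fun v ↦ Real.sqrt (v ^ 2 + δ u ^ 2)
  have hw_abs : ∀ v, |v| ≤ w v := fun v ↦ Real.abs_le_sqrt (le_add_of_nonneg_right (sq_nonneg _))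
  have hw_top : Tendsto w atTop atTop :=
    tendsto_atTop_mono (fun v ↦ (le_abs_self v).trans (hw_abs v)) tendsto_id
  have hδu : 0 < δ u ^ 2 := pow_two_pos_of_ne_zero (hδ0 u hu)
  set A := |k u| + |δ' u| + |δ u ^ 2 * (k u + lam u)|
  obtain ⟨v, hv_small, hv_one⟩ :=
    ((tendsto_const_nhds (x := f u ^ 2 + |f u| * A)).div_atTop hw_top |>.eventually
      (gt_mem_nhds hδu) |>.and (hw_top.eventually_ge_atTop 1)).exists
  have h_bound := sq_mul_zpow_add_mul_zpow_le_div (a := f u) hn hv_one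
    (abs_quadratic_le_mul_sq (a := k u) (b := δ' u) (c := δ u ^ 2 * (k u + lam u))
      (hw_abs v) hv_one)
  linarith [hf u hu v]

/-- for every integer `n ≤ -4` there is no continuous `f : I → ℝ`
satisfying the discriminant condition (∗); i.e. no principal curvature of `Φ`
has the form `f(u) w(u,v)ⁿ` with `n ≤ -4` (here `w u v = √(v² + δ u²)`). -/
theorem no_principal_curvature_n_le_neg_four
    (I : Set ℝ) (hIopen : IsOpen I) (hIconn : I.OrdConnected)
    (hIne : I.Nonempty)
    (k δ δ' lam : ℝ → ℝ)
    (hk : ContinuousOn k I)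
    (hδdiff : ∀ u ∈ I, HasDerivAt δ (δ' u) u)
    (hδ'cont : ContinuousOn δ' I)
    (hδ0 : ∀ u ∈ I, δ u ≠ 0)
    (hlam : ContinuousOn lam I)
    (n : ℤ) (hn : n ≤ -4) :
    ¬ ∃ f : ℝ → ℝ, ContinuousOn f I ∧
      ∀ u ∈ I, ∀ v : ℝ,
        f u ^ 2 * Real.sqrt (v ^ 2 + δ u ^ 2) ^ (2 * n + 4) +
          f u * (k u * v ^ 2 + δ' u * v + δ u ^ 2 * (k u + lam u)) *
            Real.sqrt (v ^ 2 + δ u ^ 2) ^ (n + 1) - δ u ^ 2 = 0 :=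
  no_principal_curvature_n_le_neg_four_general I hIne k δ δ' lam hδ0 n hn
end

section
/- Let k₁, k₂ : I × ℝ → ℝ be the principal curvatures of Φ, i.e. continuous functions satisfying k₁·k₂ = −δ(u)²/w(u,v)⁴ and k₁ + k₂ = −(k(u)v² + δ'(u)v + δ(u)²(k(u)+λ(u)))/w(u,v)³ for all (u,v) ∈ I × ℝ. If the relation δ(u)²·k₁(u,v)³ + k(u)⁴·k₂(u,v) = 0 holds for all (u,v) ∈ I × ℝ, then δ' ≡ 0 and kλ + 1 ≡ 0 on I, i.e. Φ is an Edlinger surface. -/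
/-!
Multiplying the relation `δ² k₁³ + k⁴ k₂ = 0` by `k₁ w⁴` and using `k₁ k₂ w⁴ = -δ²` gives
`(k₁ w)² = k²`. Multiplying `k₁ + k₂ = 2H` by `k₁ w⁴` then expresses `k₁ w` linearly, and squaring
yields the polynomial identity `k² (k v² + δ' v + δ²(k + λ))² = (k² v² + δ²(k² - 1))²` in `v`.
At `v = 0` it forces `k ≠ 0`; comparing the coefficients of `v³` and `v²` then gives `δ' = 0`
and `kλ + 1 = 0`.
-/

lemma sq_mul_eq_sq_of_relation {d a x y w : ℝ} (hd : d ≠ 0) (hprod : x * y * w ^ 4 = -d ^ 2)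
    (hrel : d ^ 2 * x ^ 3 + a ^ 4 * y = 0) : (x * w) ^ 2 = a ^ 2 := by
  have h4 : d ^ 2 * ((x * w) ^ 2) ^ 2 = d ^ 2 * (a ^ 2) ^ 2 := by
    linear_combination (x * w ^ 4) * hrel - a ^ 4 * hprod
  exact (pow_left_inj₀ (sq_nonneg _) (sq_nonneg _) two_ne_zero).mp
    (mul_left_cancel₀ (pow_ne_zero 2 hd) h4)

lemma sq_mul_sq_eq_of_principal_curvatures {d a N x y v : ℝ} (hd : d ≠ 0)
    (hprod : x * y = -d ^ 2 / √(v ^ 2 + d ^ 2) ^ 4)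
    (hsum : x + y = -N / √(v ^ 2 + d ^ 2) ^ 3)
    (hrel : d ^ 2 * x ^ 3 + a ^ 4 * y = 0) :
    a ^ 2 * N ^ 2 = (a ^ 2 * v ^ 2 + d ^ 2 * (a ^ 2 - 1)) ^ 2 := by
  set w := √(v ^ 2 + d ^ 2)
  have hw : w ^ 2 = v ^ 2 + d ^ 2 := Real.sq_sqrt (by positivity)
  have hw0 : w ≠ 0 := (Real.sqrt_pos.mpr (by positivity)).ne'
  have hprod' : x * y * w ^ 4 = -d ^ 2 := by rw [hprod]; field_simp
  have hsum' : (x + y) * w ^ 3 = -N := by rw [hsum]; field_simp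
  have hxw := sq_mul_eq_sq_of_relation hd hprod' hrel
  have hlin : a ^ 2 * (v ^ 2 + d ^ 2) - d ^ 2 = -N * (x * w) := by
    linear_combination (x * w) * hsum' - hprod' - w ^ 2 * hxw - a ^ 2 * hw
  linear_combination (-(a ^ 2 * (v ^ 2 + d ^ 2) - d ^ 2 - N * (x * w))) * hlin - N ^ 2 * hxw

lemma eq_zero_and_mul_eq_of_forall_sq_eq {a b c e : ℝ} (ha : a ≠ 0)
    (h : ∀ v : ℝ, a ^ 2 * (a * v ^ 2 + b * v + c) ^ 2 = (a ^ 2 * v ^ 2 + e) ^ 2) :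
    b = 0 ∧ a * c = e := by
  have hb : 2 * a ^ 3 * b = 0 := by
    linear_combination (1 / 6 : ℝ) * h 2 - (1 / 2 : ℝ) * h 1 - (1 / 6 : ℝ) * h (-1) + (1 / 2 : ℝ) * h 0
  have hb : b = 0 := by simpa [ha] using hb
  refine ⟨hb, ?_⟩
  have hc : 2 * a ^ 2 * (a * c - e) = 0 := by
    linear_combination (1 / 2 : ℝ) * h 1 + (1 / 2 : ℝ) * h (-1) - h 0 - (a ^ 2 * b) * hb
  have hc : a * c - e = 0 := by simpa [ha] using hc
  linarith

theorem edlinger_from_principal_curvature_relation_general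
    (I : Set ℝ)
    (k δ δ' lam : ℝ → ℝ)
    (hδ0 : ∀ u ∈ I, δ u ≠ 0)
    (k₁ k₂ : ℝ → ℝ → ℝ)
    (hprod : ∀ u ∈ I, ∀ v : ℝ,
      k₁ u v * k₂ u v = -(δ u ^ 2) / Real.sqrt (v ^ 2 + δ u ^ 2) ^ 4)
    (hsum : ∀ u ∈ I, ∀ v : ℝ,
      k₁ u v + k₂ u v =
        -(k u * v ^ 2 + δ' u * v + δ u ^ 2 * (k u + lam u)) /
          Real.sqrt (v ^ 2 + δ u ^ 2) ^ 3)
    (hrel : ∀ u ∈ I, ∀ v : ℝ,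
      δ u ^ 2 * k₁ u v ^ 3 + k u ^ 4 * k₂ u v = 0) :
    ∀ u ∈ I, δ' u = 0 ∧ k u * lam u + 1 = 0 := by
  intro u hu
  have hd := hδ0 u hu
  have hpoly : ∀ v : ℝ, k u ^ 2 * (k u * v ^ 2 + δ' u * v + δ u ^ 2 * (k u + lam u)) ^ 2 =
      (k u ^ 2 * v ^ 2 + δ u ^ 2 * (k u ^ 2 - 1)) ^ 2 := fun v =>
    sq_mul_sq_eq_of_principal_curvatures hd (hprod u hu v) (hsum u hu v) (hrel u hu v)
  have hk : k u ≠ 0 := by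
    intro hk
    simpa [hk, hd, eq_comm (a := (0 : ℝ))] using hpoly 0
  obtain ⟨hδ', hc⟩ := eq_zero_and_mul_eq_of_forall_sq_eq hk hpoly
  have hdlam : δ u ^ 2 * (k u * lam u + 1) = 0 := by linear_combination hc
  exact ⟨hδ', (mul_eq_zero.mp hdlam).resolve_left (pow_ne_zero 2 hd)⟩

/-- Corollary: let `k₁, k₂` be the principal curvatures of `Φ`,
i.e. continuous functions on `I × ℝ` with `k₁k₂ = K = -δ²/w⁴` and
`k₁ + k₂ = 2H = -(k v² + δ' v + δ²(k+λ))/w³`, where `w u v = √(v² + δ u²)`.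
If `δ² k₁³ + k⁴ k₂ = 0` holds identically, then `Φ` is an Edlinger surface,
i.e. `δ' ≡ 0` and `kλ + 1 ≡ 0` on `I`. -/
theorem edlinger_from_principal_curvature_relation
    (I : Set ℝ) (hIopen : IsOpen I) (hIconn : I.OrdConnected)
    (k δ δ' lam : ℝ → ℝ)
    (hk : ContinuousOn k I)
    (hδdiff : ∀ u ∈ I, HasDerivAt δ (δ' u) u)
    (hδ'cont : ContinuousOn δ' I)
    (hδ0 : ∀ u ∈ I, δ u ≠ 0)
    (hlam : ContinuousOn lam I)
    (k₁ k₂ : ℝ → ℝ → ℝ)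
    (hk₁cont : ContinuousOn (fun p : ℝ × ℝ => k₁ p.1 p.2) (I ×ˢ (Set.univ : Set ℝ)))
    (hk₂cont : ContinuousOn (fun p : ℝ × ℝ => k₂ p.1 p.2) (I ×ˢ (Set.univ : Set ℝ)))
    (hprod : ∀ u ∈ I, ∀ v : ℝ,
      k₁ u v * k₂ u v = -(δ u ^ 2) / Real.sqrt (v ^ 2 + δ u ^ 2) ^ 4)
    (hsum : ∀ u ∈ I, ∀ v : ℝ,
      k₁ u v + k₂ u v =
        -(k u * v ^ 2 + δ' u * v + δ u ^ 2 * (k u + lam u)) /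
          Real.sqrt (v ^ 2 + δ u ^ 2) ^ 3)
    (hrel : ∀ u ∈ I, ∀ v : ℝ,
      δ u ^ 2 * k₁ u v ^ 3 + k u ^ 4 * k₂ u v = 0) :
    ∀ u ∈ I, δ' u = 0 ∧ k u * lam u + 1 = 0 :=
  edlinger_from_principal_curvature_relation_general I k δ δ' lam hδ0 k₁ k₂ hprod hsum hrel
end

section
/- Suppose n ∈ ℤ, f : I → ℝ is continuous, and the normal curvature of Φ along the curves of constant striction distance (the curves v = const) has the form f(u)·w(u,v)ⁿ, i.e. for all u ∈ I and v ∈ ℝ: f(u)·w(u,v)^{n+1}·(v² + δ(u)²(λ(u)²+1)) + k(u)v² + δ'(u)v + δ(u)²(k(u) − λ(u)) = 0. Then either (a) f ≡ 0 and k ≡ δ' ≡ λ ≡ 0 on I (Φ is a helicoid), or (b) n = −1, f(u) = −k(u) and δ'(u) = 0 for all u ∈ I, and moreover λ ≡ 0 on I or kλ + 1 ≡ 0 on I (Φ is a constantly dralled orthoid or an Edlinger surface). -/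
set_option maxHeartbeats 1000000

lemma key_aux (m : ℤ) (d L k F : ℝ) (hd : d ≠ 0) (hF : F ≠ 0)
    (h : ∀ v : ℝ, F * Real.sqrt (v ^ 2 + d ^ 2) ^ m * (v ^ 2 + d ^ 2 * (L ^ 2 + 1)) +
      k * v ^ 2 + d ^ 2 * (k - L) = 0) :
    m = 0 ∧ F = -k ∧ L * (k * L + 1) = 0 := by
  have hd2 : (0:ℝ) < d ^ 2 := by positivity
  set c : ℝ := d ^ 2 * (L ^ 2 + 1) with hc_def
  set D : ℝ := d ^ 2 * (k - L) with hD_def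
  have hc : 0 < c := by rw [hc_def]; positivity
  have hwpos : ∀ v : ℝ, 0 < Real.sqrt (v ^ 2 + d ^ 2) :=
    fun v => Real.sqrt_pos.2 (by positivity)
  have hw2 : ∀ v : ℝ, Real.sqrt (v ^ 2 + d ^ 2) ^ 2 = v ^ 2 + d ^ 2 :=
    fun v => Real.sq_sqrt (by positivity)
  have hm : m = 0 := by
    by_contra hm0
    rcases (Ne.lt_or_gt hm0) with hneg | hpos
    · -- m < 0 : multiply out by w^p
      set p : ℕ := (-m).toNat with hp_def
      have hp1 : 1 ≤ p := by omega
      have hmp : m = -(p : ℤ) := by omega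
      have hB : ∀ v : ℝ, F * (v ^ 2 + c) + (k * v ^ 2 + D) * Real.sqrt (v ^ 2 + d ^ 2) ^ p = 0 := by
        intro v
        have h0 := h v
        rw [hmp, zpow_neg, zpow_natCast] at h0
        have hwp : (0:ℝ) < Real.sqrt (v ^ 2 + d ^ 2) ^ p := pow_pos (hwpos v) p
        have h1 : (F * (Real.sqrt (v ^ 2 + d ^ 2) ^ p)⁻¹ * (v ^ 2 + c) + k * v ^ 2 + D)
            * Real.sqrt (v ^ 2 + d ^ 2) ^ p = 0 := by rw [h0]; ring
        field_simp at h1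
        linarith [h1]
      have hSq : ∀ v : ℝ, F ^ 2 * (v ^ 2 + c) ^ 2 = (k * v ^ 2 + D) ^ 2 * (v ^ 2 + d ^ 2) ^ p := by
        intro v
        have h1 := hB v
        have h2 : F * (v ^ 2 + c) = -((k * v ^ 2 + D) * Real.sqrt (v ^ 2 + d ^ 2) ^ p) := by
          linarith
        have h3 : (Real.sqrt (v ^ 2 + d ^ 2) ^ p) ^ 2 = (v ^ 2 + d ^ 2) ^ p := by
          rw [← pow_mul, mul_comm, pow_mul, hw2 v]
        calc F ^ 2 * (v ^ 2 + c) ^ 2 = (F * (v ^ 2 + c)) ^ 2 := by ring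
          _ = ((k * v ^ 2 + D) * Real.sqrt (v ^ 2 + d ^ 2) ^ p) ^ 2 := by rw [h2]; ring
          _ = (k * v ^ 2 + D) ^ 2 * (v ^ 2 + d ^ 2) ^ p := by rw [mul_pow, h3]
      -- step 1 : k = 0
      have hk0 : k = 0 := by
        by_contra hk
        have hk2 : (0:ℝ) < k ^ 2 := by positivity
        set A : ℝ := 2 * (D ^ 2 + F ^ 2 * (1 + c) ^ 2) / k ^ 2 with hA_def
        have hA0 : 0 ≤ A := by positivity
        set v : ℝ := max 1 (A + 1) with hv_def
        have hv1 : (1:ℝ) ≤ v := le_max_left _ _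
        have hvA : A < v := lt_of_lt_of_le (lt_add_one A) (le_max_right _ _)
        have hv2A : A < v ^ 2 := lt_of_lt_of_le hvA (by nlinarith)
        have hvbig : D ^ 2 + F ^ 2 * (1 + c) ^ 2 < k ^ 2 * v ^ 2 / 2 := by
          rw [hA_def] at hv2A
          rw [div_lt_iff₀ hk2] at hv2A
          nlinarith
        have hbase : (1:ℝ) ≤ v ^ 2 + d ^ 2 := by nlinarith
        have hpow : v ^ 2 ≤ (v ^ 2 + d ^ 2) ^ p :=
          le_trans (by nlinarith) (le_self_pow₀ hbase (by omega))
        have hS := hSq v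
        -- (k v²+D)² ≥ k²v⁴/2 - D²  ;  (v²+c) ≤ (1+c)v²  ; combine
        have hlow : (k * v ^ 2 + D) ^ 2 * v ^ 2 ≤ (k * v ^ 2 + D) ^ 2 * (v ^ 2 + d ^ 2) ^ p :=
          mul_le_mul_of_nonneg_left hpow (sq_nonneg _)
        have e1 : k ^ 2 * v ^ 4 / 2 - D ^ 2 ≤ (k * v ^ 2 + D) ^ 2 := by
          nlinarith [sq_nonneg (k * v ^ 2 + 2 * D)]
        have e2 : (k ^ 2 * v ^ 4 / 2 - D ^ 2) * v ^ 2 ≤ (k * v ^ 2 + D) ^ 2 * v ^ 2 :=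
          mul_le_mul_of_nonneg_right e1 (sq_nonneg v)
        have e3 : v ^ 2 + c ≤ (1 + c) * v ^ 2 := by
          have hv2' : (1:ℝ) ≤ v ^ 2 := by nlinarith
          have := mul_le_mul_of_nonneg_left hv2' (le_of_lt hc)
          linarith
        have e4 : F ^ 2 * (v ^ 2 + c) ^ 2 ≤ F ^ 2 * ((1 + c) * v ^ 2) ^ 2 :=
          mul_le_mul_of_nonneg_left (pow_le_pow_left₀ (by positivity) e3 2) (sq_nonneg F)
        have e5 : (D ^ 2 + F ^ 2 * (1 + c) ^ 2) * v ^ 4 < (k ^ 2 * v ^ 2 / 2) * v ^ 4 :=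
          mul_lt_mul_of_pos_right hvbig (by positivity)
        have e6 : D ^ 2 * v ^ 2 ≤ D ^ 2 * v ^ 4 :=
          mul_le_mul_of_nonneg_left (by nlinarith) (sq_nonneg D)
        nlinarith [e2, e3, e4, e5, e6, hS, hlow]
      -- now D ≠ 0
      have hD0 : D ≠ 0 := by
        intro hDz
        have h0 := hB 0
        rw [hk0, hDz] at h0
        have hFc : F * c = 0 := by linear_combination h0
        rcases mul_eq_zero.1 hFc with h' | h'
        · exact hF h'
        · exact absurd h' (ne_of_gt hc)
      -- case on p
      rcases Nat.lt_or_ge p 3 with hp3 | hp3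
      · interval_cases p
        · -- p = 1
          have hSq1 : ∀ v : ℝ, F ^ 2 * (v ^ 2 + c) ^ 2 = D ^ 2 * (v ^ 2 + d ^ 2) := by
            intro v; have := hSq v; rw [hk0] at this; rw [pow_one] at this; linarith [this]
          have hF2 : (0:ℝ) < F ^ 2 := by positivity
          set A : ℝ := 2 * D ^ 2 / F ^ 2 with hA_def
          set v : ℝ := max (max 1 (A + 1)) |d| with hv_def
          have hv1 : (1:ℝ) ≤ v := le_trans (le_max_left _ _) (le_max_left _ _)
          have hvA : A < v := lt_of_lt_of_le (lt_add_one A)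
            (le_trans (le_max_right _ _) (le_max_left _ _))
          have hvd : |d| ≤ v := le_max_right _ _
          have hd2v : d ^ 2 ≤ v ^ 2 := by
            have := sq_abs d; nlinarith [abs_nonneg d]
          have hv2A : A < v ^ 2 := lt_of_lt_of_le hvA (by nlinarith)
          have hvbig : 2 * D ^ 2 < F ^ 2 * v ^ 2 := by
            rw [hA_def, div_lt_iff₀ hF2] at hv2A; nlinarith
          have hS1 := hSq1 v
          have e1 : F ^ 2 * v ^ 4 ≤ F ^ 2 * (v ^ 2 + c) ^ 2 :=
            mul_le_mul_of_nonneg_left (by nlinarith) (sq_nonneg F)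
          have e2 : D ^ 2 * (v ^ 2 + d ^ 2) ≤ D ^ 2 * (2 * v ^ 2) :=
            mul_le_mul_of_nonneg_left (by nlinarith) (sq_nonneg D)
          have e3 : (2 * D ^ 2) * v ^ 2 < (F ^ 2 * v ^ 2) * v ^ 2 :=
            mul_lt_mul_of_pos_right hvbig (by positivity)
          nlinarith [e1, e2, e3, hS1]
        · -- p = 2
          have hSq2 : ∀ v : ℝ, F * (v ^ 2 + c) + D * (v ^ 2 + d ^ 2) = 0 := by
            intro v
            have h1 := hB v
            rw [hk0] at h1
            have h3 : Real.sqrt (v ^ 2 + d ^ 2) ^ 2 = v ^ 2 + d ^ 2 := hw2 v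
            rw [h3] at h1
            linarith
          have e0 := hSq2 0
          have e1 := hSq2 1
          have hFD : F = -D := by nlinarith
          have hcd : c = d ^ 2 := by
            rw [hFD] at e0
            have : D * (c - d ^ 2) = 0 := by linear_combination -e0
            rcases mul_eq_zero.1 this with h | h
            · exact absurd h hD0
            · linarith
          have hL0 : L = 0 := by
            have : d ^ 2 * L ^ 2 = 0 := by rw [hc_def] at hcd; linear_combination hcd
            have hL2 : L ^ 2 = 0 := by
              rcases mul_eq_zero.1 this with h | h
              · exact absurd h (by positivity)
              · exact h
            exact pow_eq_zero_iff (by norm_num) |>.1 hL2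
          apply hD0
          rw [hD_def, hk0, hL0]; ring
      · -- p ≥ 3
        have hSqp : ∀ v : ℝ, F ^ 2 * (v ^ 2 + c) ^ 2 = D ^ 2 * (v ^ 2 + d ^ 2) ^ p := by
          intro v; have := hSq v; rw [hk0] at this; linarith [this]
        have hD2 : (0:ℝ) < D ^ 2 := by positivity
        set A : ℝ := F ^ 2 * (1 + c) ^ 2 / D ^ 2 with hA_def
        set v : ℝ := max 1 (A + 1) with hv_def
        have hv1 : (1:ℝ) ≤ v := le_max_left _ _
        have hvA : A < v := lt_of_lt_of_le (lt_add_one A) (le_max_right _ _)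
        have hv2A : A < v ^ 2 := lt_of_lt_of_le hvA (by nlinarith)
        have hvbig : F ^ 2 * (1 + c) ^ 2 < D ^ 2 * v ^ 2 := by
          rw [hA_def, div_lt_iff₀ hD2] at hv2A; nlinarith
        have hpow6 : (v ^ 2) ^ 3 ≤ (v ^ 2 + d ^ 2) ^ p := by
          calc (v ^ 2) ^ 3 ≤ (v ^ 2 + d ^ 2) ^ 3 :=
                pow_le_pow_left₀ (sq_nonneg v) (by nlinarith) 3
            _ ≤ (v ^ 2 + d ^ 2) ^ p := pow_le_pow_right₀ (by nlinarith) hp3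
        have hS := hSqp v
        have hlow : D ^ 2 * (v ^ 2) ^ 3 ≤ D ^ 2 * (v ^ 2 + d ^ 2) ^ p :=
          mul_le_mul_of_nonneg_left hpow6 (le_of_lt hD2)
        have e3 : v ^ 2 + c ≤ (1 + c) * v ^ 2 := by
          have hv2' : (1:ℝ) ≤ v ^ 2 := by nlinarith
          have := mul_le_mul_of_nonneg_left hv2' (le_of_lt hc)
          linarith
        have e4 : F ^ 2 * (v ^ 2 + c) ^ 2 ≤ F ^ 2 * ((1 + c) * v ^ 2) ^ 2 :=
          mul_le_mul_of_nonneg_left (pow_le_pow_left₀ (by positivity) e3 2) (sq_nonneg F)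
        have e5 : (F ^ 2 * (1 + c) ^ 2) * v ^ 4 < (D ^ 2 * v ^ 2) * v ^ 4 :=
          mul_lt_mul_of_pos_right hvbig (by positivity)
        nlinarith [e4, e5, hS, hlow]
    · -- m > 0
      set q : ℕ := m.toNat with hq_def
      have hq1 : 1 ≤ q := by omega
      have hmq : m = (q : ℤ) := by omega
      have hB : ∀ v : ℝ, F * Real.sqrt (v ^ 2 + d ^ 2) ^ q * (v ^ 2 + c) + (k * v ^ 2 + D) = 0 := by
        intro v
        have h0 := h v
        rw [hmq, zpow_natCast] at h0
        linarith
      have hSq : ∀ v : ℝ, F ^ 2 * (v ^ 2 + d ^ 2) ^ q * (v ^ 2 + c) ^ 2 = (k * v ^ 2 + D) ^ 2 := by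
        intro v
        have h1 := hB v
        have h2 : F * Real.sqrt (v ^ 2 + d ^ 2) ^ q * (v ^ 2 + c) = -(k * v ^ 2 + D) := by linarith
        have h3 : (Real.sqrt (v ^ 2 + d ^ 2) ^ q) ^ 2 = (v ^ 2 + d ^ 2) ^ q := by
          rw [← pow_mul, mul_comm, pow_mul, hw2 v]
        calc F ^ 2 * (v ^ 2 + d ^ 2) ^ q * (v ^ 2 + c) ^ 2
            = (F * Real.sqrt (v ^ 2 + d ^ 2) ^ q * (v ^ 2 + c)) ^ 2 := by rw [← h3]; ring
          _ = (-(k * v ^ 2 + D)) ^ 2 := by rw [h2]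
          _ = (k * v ^ 2 + D) ^ 2 := by ring
      have hF2 : (0:ℝ) < F ^ 2 := by positivity
      set A : ℝ := 2 * (k ^ 2 + D ^ 2) / F ^ 2 with hA_def
      set v : ℝ := max 1 (A + 1) with hv_def
      have hv1 : (1:ℝ) ≤ v := le_max_left _ _
      have hvA : A < v := lt_of_lt_of_le (lt_add_one A) (le_max_right _ _)
      have hv2A : A < v ^ 2 := lt_of_lt_of_le hvA (by nlinarith)
      have hvbig : 2 * (k ^ 2 + D ^ 2) < F ^ 2 * v ^ 2 := by
        rw [hA_def, div_lt_iff₀ hF2] at hv2A; nlinarith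
      have hbase : (1:ℝ) ≤ v ^ 2 + d ^ 2 := by nlinarith
      have hpow : v ^ 2 ≤ (v ^ 2 + d ^ 2) ^ q :=
        le_trans (by nlinarith) (le_self_pow₀ hbase (by omega))
      have hS := hSq v
      have hlow : F ^ 2 * v ^ 2 * (v ^ 2 + c) ^ 2 ≤ F ^ 2 * (v ^ 2 + d ^ 2) ^ q * (v ^ 2 + c) ^ 2 :=
        mul_le_mul_of_nonneg_right (mul_le_mul_of_nonneg_left hpow (le_of_lt hF2)) (sq_nonneg _)
      have e1 : (k * v ^ 2 + D) ^ 2 ≤ 2 * k ^ 2 * v ^ 4 + 2 * D ^ 2 * v ^ 4 := by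
        have hv4 : (1:ℝ) ≤ v ^ 4 := one_le_pow₀ hv1
        have hD4 := mul_le_mul_of_nonneg_left hv4 (sq_nonneg D)
        nlinarith [sq_nonneg (k * v ^ 2 - D)]
      have e2 : F ^ 2 * v ^ 2 * v ^ 4 ≤ F ^ 2 * v ^ 2 * (v ^ 2 + c) ^ 2 :=
        mul_le_mul_of_nonneg_left (by nlinarith) (by positivity)
      have e3 : (2 * (k ^ 2 + D ^ 2)) * v ^ 4 < (F ^ 2 * v ^ 2) * v ^ 4 :=
        mul_lt_mul_of_pos_right hvbig (by positivity)
      nlinarith [e1, e2, e3, hS, hlow]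
  -- now m = 0
  subst hm
  have h0 := h 0
  have h1 := h 1
  simp only [zpow_zero, mul_one] at h0 h1
  have e0 : F * c + D = 0 := by linear_combination h0
  have e1 : F * (1 + c) + k + D = 0 := by linear_combination h1
  have hFk : F = -k := by linarith
  refine ⟨rfl, hFk, ?_⟩
  -- F*c = -D :  -k d²(L²+1) = -d²(k-L)  ⇒ d²(kL²+L)=0
  have : d ^ 2 * (L * (k * L + 1)) = 0 := by
    rw [hFk, hc_def, hD_def] at e0
    linear_combination -e0
  rcases mul_eq_zero.1 this with hh | hh
  · exact absurd hh (by positivity)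
  · exact hh



/-- if the normal curvature of `Φ` along the curves of constant
striction distance (`v = const`) has the form `f(u) w(u,v)ⁿ`
(where `w u v = √(v² + δ u²)`), then either `f ≡ 0` and `Φ` is a helicoid,
or `n = -1`, `f = -k`, `δ' ≡ 0`, and `Φ` is a constantly dralled orthoid
(`λ ≡ 0`) or an Edlinger surface (`kλ + 1 ≡ 0`). -/
theorem normal_curvature_constant_striction_distance
    (I : Set ℝ) (hIopen : IsOpen I) (hIconn : I.OrdConnected)
    (k δ δ' lam : ℝ → ℝ)
    (hk : ContinuousOn k I)
    (hδdiff : ∀ u ∈ I, HasDerivAt δ (δ' u) u)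
    (hδ'cont : ContinuousOn δ' I)
    (hδ0 : ∀ u ∈ I, δ u ≠ 0)
    (hlam : ContinuousOn lam I)
    (n : ℤ) (f : ℝ → ℝ) (hf : ContinuousOn f I)
    (hcond : ∀ u ∈ I, ∀ v : ℝ,
      f u * Real.sqrt (v ^ 2 + δ u ^ 2) ^ (n + 1) *
          (v ^ 2 + δ u ^ 2 * (lam u ^ 2 + 1)) +
        k u * v ^ 2 + δ' u * v + δ u ^ 2 * (k u - lam u) = 0) :
    ((∀ u ∈ I, f u = 0) ∧ (∀ u ∈ I, k u = 0 ∧ δ' u = 0 ∧ lam u = 0)) ∨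
    (n = -1 ∧ (∀ u ∈ I, f u = -k u ∧ δ' u = 0) ∧
      ((∀ u ∈ I, lam u = 0) ∨ (∀ u ∈ I, k u * lam u + 1 = 0))) := by
  -- δ' vanishes everywhere, by symmetry v ↔ -v
  have hδ'0 : ∀ u ∈ I, δ' u = 0 := by
    intro u hu
    have h1 := hcond u hu 1
    have h2 := hcond u hu (-1)
    have e : ((-1 : ℝ)) ^ 2 = (1 : ℝ) ^ 2 := by norm_num
    rw [e] at h2
    linarith
  -- pointwise dichotomy
  have hpoint : ∀ u ∈ I, (f u = 0 → k u = 0 ∧ lam u = 0) ∧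
      (f u ≠ 0 → n = -1 ∧ f u = -k u ∧ lam u * (k u * lam u + 1) = 0) := by
    intro u hu
    have hδ' := hδ'0 u hu
    have hd2 : (0:ℝ) < δ u ^ 2 := by have := hδ0 u hu; positivity
    constructor
    · intro hf0
      have h0 := hcond u hu 0
      have h1 := hcond u hu 1
      rw [hf0, hδ'] at h0 h1
      have hD : δ u ^ 2 * (k u - lam u) = 0 := by linear_combination h0
      have hk0 : k u = 0 := by linear_combination h1 - h0
      refine ⟨hk0, ?_⟩
      rw [hk0] at hD
      have := mul_eq_zero.1 hD
      rcases this with h | h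
      · exact absurd h (ne_of_gt hd2)
      · linarith
    · intro hfu
      have hkey := key_aux (n + 1) (δ u) (lam u) (k u) (f u) (hδ0 u hu) hfu
        (fun v => by have hh := hcond u hu v; rw [hδ'] at hh; linarith)
      obtain ⟨hm, hFk, hL⟩ := hkey
      exact ⟨by omega, hFk, hL⟩
  by_cases hall : ∀ u ∈ I, f u = 0
  · left
    refine ⟨hall, fun u hu => ?_⟩
    obtain ⟨hk0, hl0⟩ := (hpoint u hu).1 (hall u hu)
    exact ⟨hk0, hδ'0 u hu, hl0⟩
  · right
    push_neg at hall
    obtain ⟨u₀, hu₀, hfu₀⟩ := hall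
    have hn : n = -1 := ((hpoint u₀ hu₀).2 hfu₀).1
    have hbk : ∀ u ∈ I, f u = -k u ∧ lam u * (k u * lam u + 1) = 0 := by
      intro u hu
      by_cases hfu : f u = 0
      · obtain ⟨hk0, hl0⟩ := (hpoint u hu).1 hfu
        exact ⟨by rw [hfu, hk0, neg_zero], by rw [hl0, zero_mul]⟩
      · obtain ⟨_, h2, h3⟩ := (hpoint u hu).2 hfu
        exact ⟨h2, h3⟩
    refine ⟨hn, fun u hu => ⟨(hbk u hu).1, hδ'0 u hu⟩, ?_⟩
    by_cases hlz : ∀ u ∈ I, lam u = 0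
    · exact Or.inl hlz
    · right
      push_neg at hlz
      obtain ⟨b, hb, hlb⟩ := hlz
      have hgb : k b * lam b + 1 = 0 := by
        rcases mul_eq_zero.1 (hbk b hb).2 with h | h
        · exact absurd h hlb
        · exact h
      intro a ha
      by_contra hga
      have hla : lam a = 0 := by
        rcases mul_eq_zero.1 (hbk a ha).2 with h | h
        · exact h
        · exact absurd h hga
      have hga1 : k a * lam a + 1 = 1 := by rw [hla]; ring
      set g : ℝ → ℝ := fun u => k u * lam u + 1 with hg_def
      have hgc : ContinuousOn g I := (hk.mul hlam).add continuousOn_const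
      have hsub : Set.uIcc a b ⊆ I := hIconn.uIcc_subset ha hb
      have hivt := intermediate_value_uIcc (hgc.mono hsub)
      have hmem : (1/2 : ℝ) ∈ Set.uIcc (g a) (g b) := by
        have hga' : g a = 1 := hga1
        have hgb' : g b = 0 := hgb
        rw [hga', hgb', Set.mem_uIcc]
        norm_num
      obtain ⟨x, hx, hgx⟩ := hivt hmem
      have hxI : x ∈ I := hsub hx
      rcases mul_eq_zero.1 (hbk x hxI).2 with h | h
      · have : g x = 1 := by simp only [hg_def]; rw [h]; ring
        rw [hgx] at this; norm_num at this
      · have : g x = 0 := h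
        rw [hgx] at this; norm_num at this
end

section
/- Suppose n ∈ ℤ with n ≠ −1, f : I → ℝ is continuous, and for all u ∈ I and v ∈ ℝ: f(u)·w(u,v)^{n+1}·(v² + δ(u)²(λ(u)²+1)) + k(u)v² + δ'(u)v + δ(u)²(k(u) − λ(u)) = 0. Then f ≡ 0 on I, and consequently k ≡ δ' ≡ λ ≡ 0 on I (Φ is a helicoid). -/
open Polynomial in
private lemma polyEqOfNonnegEval {p q : Polynomial ℝ}
    (h : ∀ t : ℝ, 0 ≤ t → p.eval t = q.eval t) : p = q := by
  apply Polynomial.eq_of_infinite_eval_eq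
  exact Set.Infinite.mono (fun x hx => h x hx) (Set.Ici_infinite (0:ℝ))

private lemma auxZero (q : ℤ) (hq : q ≠ 0) (f k e d c lam : ℝ) (hd : d ≠ 0)
    (hc : c = d^2*(lam^2+1)) (he : e = d^2*(k - lam))
    (h : ∀ t : ℝ, 0 ≤ t → f^2 * (t + d^2)^q * (t + c)^2 = (k*t + e)^2) :
    f = 0 := by
  have hd2 : (0:ℝ) < d^2 := by positivity
  rcases lt_or_gt_of_ne hq with hneg | hpos
  · -- q < 0 : identity f²(t+c)² = (kt+e)²(t+d²)^b
    set b : ℕ := (-q).toNat with hb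
    have hbq : (b:ℤ) = -q := Int.toNat_of_nonneg (by omega)
    have hb1 : 1 ≤ b := by omega
    have key : ∀ t : ℝ, 0 ≤ t →
        f^2 * (t + c)^2 = (k*t + e)^2 * (t + d^2)^b := by
      intro t ht
      have hpos : (0:ℝ) < t + d^2 := by positivity
      have hz : (t + d^2)^q = ((t + d^2)^b)⁻¹ := by
        rw [show q = -(b:ℤ) by omega, zpow_neg, zpow_natCast]
      have h' := h t ht
      rw [hz] at h'
      have hne : ((t + d^2)^b : ℝ) ≠ 0 := by positivity
      field_simp at h'
      linarith [h']
    set P : Polynomial ℝ := Polynomial.C (f^2) * (Polynomial.X + Polynomial.C c)^2 with hP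
    set Q : Polynomial ℝ :=
      (Polynomial.C k * Polynomial.X + Polynomial.C e)^2 *
        (Polynomial.X + Polynomial.C (d^2))^b with hQ
    have hPQ : P = Q := by
      apply polyEqOfNonnegEval
      intro t ht
      simp only [hP, hQ, Polynomial.eval_mul, Polynomial.eval_pow, Polynomial.eval_add,
        Polynomial.eval_X, Polynomial.eval_C]
      exact key t ht
    have E : ∀ t : ℝ, f^2 * (t + c)^2 = (k*t + e)^2 * (t + d^2)^b := by
      intro t
      have := congrArg (Polynomial.eval t) hPQ
      simpa only [hP, hQ, Polynomial.eval_mul, Polynomial.eval_pow, Polynomial.eval_add,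
        Polynomial.eval_X, Polynomial.eval_C] using this
    have E1 := E (-(d^2))
    rw [show (-(d^2) + d^2 : ℝ) = 0 by ring, zero_pow (by omega : b ≠ 0)] at E1
    have hE1 : f^2 * (-(d^2) + c)^2 = 0 := by rw [E1]; ring
    rcases mul_eq_zero.mp hE1 with h1 | h1
    · exact pow_eq_zero_iff two_ne_zero |>.mp h1
    · -- c = d², so lam = 0, e = k d²
      have hcd : c = d^2 := by
        have := pow_eq_zero_iff (n := 2) (two_ne_zero) |>.mp h1
        linarith
      have hlam0 : lam = 0 := by
        have h2 : d^2*lam^2 = 0 := by nlinarith [hc, hcd]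
        have := (mul_eq_zero.mp h2).resolve_left (ne_of_gt hd2)
        exact pow_eq_zero_iff (two_ne_zero) |>.mp this
      have he' : e = k * d^2 := by rw [he, hlam0]; ring
      have E0 := E 0
      have E2 := E 1
      rw [hcd] at E0 E2
      simp only [zero_add, mul_zero, mul_one] at E0 E2
      have G0 : f^2 = k^2 * (d^2)^b := by
        have h4 : ((d^2)^2:ℝ) ≠ 0 := by positivity
        apply mul_right_cancel₀ h4
        calc f^2 * (d^2)^2 = e^2 * (d^2)^b := E0
          _ = k^2 * (d^2)^b * (d^2)^2 := by rw [he']; ring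
      have G1 : f^2 = k^2 * (1+d^2)^b := by
        have h4 : ((1+d^2)^2:ℝ) ≠ 0 := by positivity
        apply mul_right_cancel₀ h4
        calc f^2 * (1+d^2)^2 = (k + e)^2 * (1+d^2)^b := E2
          _ = k^2 * (1+d^2)^b * (1+d^2)^2 := by rw [he']; ring
      have hlt : (d^2)^b < (1+d^2)^b := by
        apply pow_lt_pow_left₀ (by linarith) (le_of_lt hd2)
        omega
      have hdiff : k^2 * ((1+d^2)^b - (d^2)^b) = 0 := by linear_combination G0 - G1
      have hk0 : k = 0 := by
        rcases mul_eq_zero.mp hdiff with h2 | h2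
        · exact pow_eq_zero_iff (two_ne_zero) |>.mp h2
        · linarith
      have hf2 : f^2 = 0 := by rw [G0, hk0]; ring
      exact pow_eq_zero_iff (two_ne_zero) |>.mp hf2
  · -- q > 0 : identity f²(t+d²)^a(t+c)² = (kt+e)²
    set a : ℕ := q.toNat with ha
    have haq : (a:ℕ) = q := Int.toNat_of_nonneg (by omega)
    have ha1 : 1 ≤ a := by omega
    have key : ∀ t : ℝ, 0 ≤ t →
        f^2 * (t + d^2)^a * (t + c)^2 = (k*t + e)^2 := by
      intro t ht
      have h' := h t ht
      rwa [show q = (a:ℤ) by omega, zpow_natCast] at h'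
    set P : Polynomial ℝ := Polynomial.C (f^2) * (Polynomial.X + Polynomial.C (d^2))^a *
      (Polynomial.X + Polynomial.C c)^2 with hP
    set Q : Polynomial ℝ := (Polynomial.C k * Polynomial.X + Polynomial.C e)^2 with hQ
    have hPQ : P = Q := by
      apply polyEqOfNonnegEval
      intro t ht
      simp only [hP, hQ, Polynomial.eval_mul, Polynomial.eval_pow, Polynomial.eval_add,
        Polynomial.eval_X, Polynomial.eval_C]
      exact key t ht
    have E : ∀ t : ℝ, f^2 * (t + d^2)^a * (t + c)^2 = (k*t + e)^2 := by
      intro t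
      have := congrArg (Polynomial.eval t) hPQ
      simpa only [hP, hQ, Polynomial.eval_mul, Polynomial.eval_pow, Polynomial.eval_add,
        Polynomial.eval_X, Polynomial.eval_C] using this
    have E1 := E (-(d^2))
    rw [show (-(d^2) + d^2 : ℝ) = 0 by ring, zero_pow (by omega : a ≠ 0)] at E1
    have he1 : e = k * d^2 := by
      have h2 : (k*(-(d^2)) + e)^2 = 0 := by rw [← E1]; ring
      have := pow_eq_zero_iff (two_ne_zero) |>.mp h2
      linear_combination this
    have E2 := E (-c)
    have he2 : e = k * c := by
      have h2 : (k*(-c) + e)^2 = 0 := by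
        rw [← E2, show (-c + c : ℝ) = 0 by ring]; ring
      have := pow_eq_zero_iff (two_ne_zero) |>.mp h2
      linear_combination this
    have hkcd : k * (d^2 * lam^2) = 0 := by
      have : k * c = k * d^2 := by rw [← he1, ← he2]
      rw [hc] at this
      linear_combination this
    by_cases hk0 : k = 0
    · have he0 : e = 0 := by rw [he1, hk0]; ring
      have E0 := E 0
      rw [hk0, he0] at E0
      simp only [zero_mul, zero_add, add_zero, mul_zero] at E0
      have hc0 : (0:ℝ) < c := by rw [hc]; positivity
      have hpos1 : (0:ℝ) < (d^2)^a * c^2 := by positivity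
      have hf2 : f^2 * ((d^2)^a * c^2) = 0 := by rw [← mul_assoc]; rw [E0]; ring
      have : f^2 = 0 := by
        rcases mul_eq_zero.mp hf2 with h2 | h2
        · exact h2
        · exact absurd h2 (ne_of_gt hpos1)
      exact pow_eq_zero_iff (two_ne_zero) |>.mp this
    · have hlam0 : lam = 0 := by
        have h2 : d^2 * lam^2 = 0 := (mul_eq_zero.mp hkcd).resolve_left hk0
        have := (mul_eq_zero.mp h2).resolve_left (ne_of_gt hd2)
        exact pow_eq_zero_iff (two_ne_zero) |>.mp this
      have hcd : c = d^2 := by rw [hc, hlam0]; ring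
      have E0 := E 0
      have E3 := E 1
      rw [hcd, he1] at E0 E3
      simp only [zero_add, mul_zero, mul_one] at E0 E3
      have G0 : f^2 * (d^2)^a = k^2 := by
        have h4 : ((d^2)^2:ℝ) ≠ 0 := by positivity
        apply mul_right_cancel₀ h4
        calc f^2 * (d^2)^a * (d^2)^2 = (k*d^2)^2 := E0
          _ = k^2 * (d^2)^2 := by ring
      have G1 : f^2 * (1+d^2)^a = k^2 := by
        have h4 : ((1+d^2)^2:ℝ) ≠ 0 := by positivity
        apply mul_right_cancel₀ h4
        calc f^2 * (1+d^2)^a * (1+d^2)^2 = (k + k*d^2)^2 := E3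
          _ = k^2 * (1+d^2)^2 := by ring
      have hlt : (d^2)^a < (1+d^2)^a := by
        apply pow_lt_pow_left₀ (by linarith) (le_of_lt hd2)
        omega
      have hdiff : f^2 * ((1+d^2)^a - (d^2)^a) = 0 := by linear_combination G1 - G0
      rcases mul_eq_zero.mp hdiff with h2 | h2
      · exact pow_eq_zero_iff (two_ne_zero) |>.mp h2
      · linarith

/-- if `n ≠ -1` and the normal curvature of `Φ` along the curves
of constant striction distance has the form `f(u) w(u,v)ⁿ`
(where `w u v = √(v² + δ u²)`), then `f ≡ 0` on `I` and consequently
`k ≡ δ' ≡ λ ≡ 0` on `I`, i.e. `Φ` is a helicoid. -/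
theorem normal_curvature_constant_striction_distance_n_ne_neg_one
    (I : Set ℝ) (hIopen : IsOpen I) (hIconn : I.OrdConnected)
    (k δ δ' lam : ℝ → ℝ)
    (hk : ContinuousOn k I)
    (hδdiff : ∀ u ∈ I, HasDerivAt δ (δ' u) u)
    (hδ'cont : ContinuousOn δ' I)
    (hδ0 : ∀ u ∈ I, δ u ≠ 0)
    (hlam : ContinuousOn lam I)
    (n : ℤ) (hn : n ≠ -1) (f : ℝ → ℝ) (hf : ContinuousOn f I)
    (hcond : ∀ u ∈ I, ∀ v : ℝ,
      f u * Real.sqrt (v ^ 2 + δ u ^ 2) ^ (n + 1) *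
          (v ^ 2 + δ u ^ 2 * (lam u ^ 2 + 1)) +
        k u * v ^ 2 + δ' u * v + δ u ^ 2 * (k u - lam u) = 0) :
    (∀ u ∈ I, f u = 0) ∧ ∀ u ∈ I, k u = 0 ∧ δ' u = 0 ∧ lam u = 0 := by
  have main : ∀ u ∈ I, f u = 0 ∧ k u = 0 ∧ δ' u = 0 ∧ lam u = 0 := by
    intro u hu
    have hd : δ u ≠ 0 := hδ0 u hu
    have hd2 : (0:ℝ) < δ u ^ 2 := by positivity
    -- δ' u = 0 from v = 1, v = -1
    have hδ'0 : δ' u = 0 := by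
      have h1 := hcond u hu 1
      have h2 := hcond u hu (-1)
      have h3 : ((-1:ℝ))^2 = (1:ℝ)^2 := by norm_num
      rw [h3] at h2
      linarith
    -- squared identity
    have hsq : ∀ t : ℝ, 0 ≤ t →
        (f u)^2 * (t + δ u ^ 2)^(n+1) * (t + δ u ^ 2 * (lam u ^ 2 + 1))^2
          = (k u * t + δ u ^ 2 * (k u - lam u))^2 := by
      intro t ht
      set v := Real.sqrt t with hv
      have hv2 : v^2 = t := Real.sq_sqrt ht
      have h0 := hcond u hu v
      rw [hv2, hδ'0] at h0
      set s := Real.sqrt (t + δ u ^ 2) with hs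
      have hspos : (0:ℝ) < t + δ u ^ 2 := by positivity
      have hs2 : s^2 = t + δ u ^ 2 := Real.sq_sqrt (le_of_lt hspos)
      have hW2 : (s^(n+1))^2 = (t + δ u ^ 2)^(n+1) := by
        have h5 : (s^(n+1))^(2:ℕ) = (s^(2:ℕ))^(n+1) := by
          rw [← zpow_natCast (s^(n+1)), ← zpow_mul, mul_comm, zpow_mul, zpow_natCast]
        rw [h5, hs2]
      have h1 : f u * s^(n+1) * (t + δ u ^ 2 * (lam u ^ 2 + 1))
          = -(k u * t + δ u ^ 2 * (k u - lam u)) := by linarith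
      have h2 := congrArg (fun x => x^2) h1
      simp only [neg_sq] at h2
      calc (f u)^2 * (t + δ u ^ 2)^(n+1) * (t + δ u ^ 2 * (lam u ^ 2 + 1))^2
          = (f u)^2 * (s^(n+1))^2 * (t + δ u ^ 2 * (lam u ^ 2 + 1))^2 := by rw [hW2]
        _ = (f u * s^(n+1) * (t + δ u ^ 2 * (lam u ^ 2 + 1)))^2 := by ring
        _ = (k u * t + δ u ^ 2 * (k u - lam u))^2 := h2
    have hf0 : f u = 0 := by
      apply auxZero (n+1) (by omega) (f u) (k u) (δ u ^ 2 * (k u - lam u)) (δ u)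
        (δ u ^ 2 * (lam u ^ 2 + 1)) (lam u) hd rfl rfl
      exact hsq
    -- now k, lam
    have h00 := hcond u hu 0
    have h01 := hcond u hu 1
    rw [hf0, hδ'0] at h00 h01
    simp only [zero_mul, mul_zero] at h00 h01
    have he0 : δ u ^ 2 * (k u - lam u) = 0 := by nlinarith [h00]
    have hk0 : k u = 0 := by nlinarith [h01, he0]
    have hlam0 : lam u = 0 := by
      have := (mul_eq_zero.mp he0).resolve_left (ne_of_gt hd2)
      linarith [this, hk0]
    exact ⟨hf0, hk0, hδ'0, hlam0⟩
  exact ⟨fun u hu => (main u hu).1, fun u hu => (main u hu).2⟩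
end

section
/- Suppose n ∈ ℤ, f : I → ℝ is continuous, and the normal curvature of Φ along the orthogonal trajectories of the curves of constant striction distance has the form f(u)·w(u,v)ⁿ, i.e. for all u ∈ I and v ∈ ℝ: f(u)·w(u,v)^{n+3}·(v² + δ(u)²(λ(u)²+1)) + δ(u)²λ(u)·((k(u)λ(u)+2)v² + δ'(u)λ(u)v + δ(u)²(λ(u)² + k(u)λ(u) + 2)) = 0. Then either (a) f ≡ 0 and λ ≡ 0 on I (Φ is an orthoid), or (b) n = −3 and for all u ∈ I: δ'(u) = 0, k(u)λ(u) + 1 = 0 and f(u) = −δ(u)²λ(u) = δ(u)²/k(u) (Φ is an Edlinger surface). -/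
open Polynomial in
lemma key_aux_s10 (m : ℤ) (f b A B s0 : ℝ) (hb : b ≠ 0) (hB : B ≠ 0) (hs0 : 0 < s0)
    (h : ∀ s : ℝ, s0 ≤ s → f * s ^ m * (s ^ 2 + b) + A * s ^ 2 + B = 0) :
    m = 0 ∧ f + A = 0 ∧ f * b + B = 0 := by
  have hq : (0:ℝ) < s0 ^ 2 := by positivity
  have hf : f ≠ 0 := by
    intro hf0
    subst hf0
    have e1 := h s0 le_rfl
    have e2 := h (2 * s0) (by linarith)
    have h3 : A * s0 ^ 2 = 0 := by linear_combination (e2 - e1) / 3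
    have hA : A = 0 := by
      rcases mul_eq_zero.1 h3 with h | h
      · exact h
      · exact absurd h hq.ne'
    rw [hA] at e1
    apply hB
    linear_combination e1
  rcases lt_trichotomy m 0 with hm | hm | hm
  · exfalso
    set N := (-m).toNat with hNdef
    have hNm : (N : ℤ) = -m := Int.toNat_of_nonneg (by omega)
    have hN1 : 1 ≤ N := by omega
    set Q : ℝ[X] := C f * (X ^ 2 + C b) + C A * X ^ (N + 2) + C B * X ^ N with hQdef
    have hQ0 : Q = 0 := by
      apply Q.eq_zero_of_infinite_isRoot
      apply Set.Infinite.mono (s := Set.Ici s0) _ (Set.Ici_infinite s0)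
      intro s hs
      have hspos : 0 < s := lt_of_lt_of_le hs0 hs
      have hsne : s ≠ 0 := ne_of_gt hspos
      have H1 := h s hs
      have H2 : s ^ m * s ^ (N : ℕ) = 1 := by
        rw [← zpow_natCast s N, ← zpow_add₀ hsne]
        rw [hNm]
        simp
      simp only [Set.mem_setOf_eq, IsRoot, hQdef, eval_add, eval_mul, eval_pow, eval_C, eval_X]
      linear_combination (s ^ (N : ℕ)) * H1 - f * (s ^ 2 + b) * H2
    have hc := congrArg (fun p => coeff p 0) hQ0
    have hN0 : N ≠ 0 := by omega
    have hN0' : ¬ (0 = N) := by omega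
    simp [hQdef, coeff_X_pow, coeff_C, mul_assoc, hN0, hN0'] at hc
    rcases hc with h | h
    exacts [hf h, hb h]
  · subst hm
    have e1 := h s0 le_rfl
    have e2 := h (2 * s0) (by linarith)
    simp only [zpow_zero, mul_one] at e1 e2
    have hfA : (f + A) * s0 ^ 2 = 0 := by linear_combination (e2 - e1) / 3
    have h1 : f + A = 0 := by
      rcases mul_eq_zero.1 hfA with h | h
      · exact h
      · exact absurd h hq.ne'
    refine ⟨rfl, h1, ?_⟩
    linear_combination e1 - s0 ^ 2 * h1
  · exfalso
    set t := m.toNat with htdef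
    have htm : (t : ℤ) = m := Int.toNat_of_nonneg (by omega)
    have ht1 : 1 ≤ t := by omega
    set P : ℝ[X] := C f * X ^ (t + 2) + C (f * b) * X ^ t + C A * X ^ 2 + C B with hPdef
    have hP0 : P = 0 := by
      apply P.eq_zero_of_infinite_isRoot
      apply Set.Infinite.mono (s := Set.Ici s0) _ (Set.Ici_infinite s0)
      intro s hs
      have H1 := h s hs
      have H2 : s ^ m = s ^ (t : ℕ) := by rw [← zpow_natCast s t, htm]
      simp only [Set.mem_setOf_eq, IsRoot, hPdef, eval_add, eval_mul, eval_pow, eval_C, eval_X]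
      linear_combination H1 - f * (s ^ 2 + b) * H2
    have hc := congrArg (fun p => coeff p (t + 2)) hP0
    have ht0 : t ≠ 0 := by omega
    simp [hPdef, coeff_X_pow, coeff_C, mul_assoc, ht0] at hc
    exact hf hc


lemma pointwise_aux (m : ℤ) (a L kk d' F : ℝ) (ha : 0 < a) (hL : L ≠ 0)
    (h : ∀ v : ℝ, F * Real.sqrt (v ^ 2 + a) ^ m * (v ^ 2 + a * (L ^ 2 + 1)) +
      a * L * ((kk * L + 2) * v ^ 2 + d' * L * v + a * (L ^ 2 + kk * L + 2)) = 0) :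
    m = 0 ∧ d' = 0 ∧ kk * L + 1 = 0 ∧ F = -a * L := by
  have h1 := h 1
  have h2 := h (-1)
  have hsq : ((-1 : ℝ)) ^ 2 = (1 : ℝ) ^ 2 := by norm_num
  rw [hsq] at h2
  have hd : d' = 0 := by
    have h5 : d' * (a * L ^ 2 * 2) = 0 := by linear_combination h1 - h2
    rcases mul_eq_zero.1 h5 with h | h
    · exact h
    · exact absurd h (by positivity)
  subst hd
  have hs0 : 0 < Real.sqrt a := Real.sqrt_pos.2 ha
  have hkey : ∀ s : ℝ, Real.sqrt a ≤ s →
      F * s ^ m * (s ^ 2 + a * L ^ 2) + (a * L * (kk * L + 2)) * s ^ 2 + a ^ 2 * L ^ 3 = 0 := by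
    intro s hs
    have hspos : 0 < s := lt_of_lt_of_le hs0 hs
    have hs2a : a ≤ s ^ 2 := by
      have := Real.sq_sqrt ha.le
      nlinarith
    have hv2 : Real.sqrt (s ^ 2 - a) ^ 2 = s ^ 2 - a := Real.sq_sqrt (by linarith)
    have h3 := h (Real.sqrt (s ^ 2 - a))
    rw [hv2] at h3
    rw [(by ring : s ^ 2 - a + a = s ^ 2), Real.sqrt_sq hspos.le] at h3
    linear_combination h3
  obtain ⟨hm0, hfA, hfb⟩ := key_aux_s10 m F (a * L ^ 2) (a * L * (kk * L + 2)) (a ^ 2 * L ^ 3)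
    (Real.sqrt a) (by positivity) (by
      intro hz
      rcases mul_eq_zero.1 hz with h | h
      · exact absurd h (by positivity)
      · exact hL (by nlinarith [pow_eq_zero_iff (n := 3) (by norm_num) |>.1 h])) hs0 hkey
  have hF : F = -a * L := by
    have h5 : (F + a * L) * (a * L ^ 2) = 0 := by linear_combination hfb
    rcases mul_eq_zero.1 h5 with h | h
    · linarith
    · exact absurd h (by positivity)
  have hk1 : kk * L + 1 = 0 := by
    rw [hF] at hfA
    have h6 : (kk * L + 1) * (a * L) = 0 := by linear_combination hfA
    rcases mul_eq_zero.1 h6 with h | h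
    · exact h
    · exact absurd h (mul_ne_zero ha.ne' hL)
  exact ⟨hm0, rfl, hk1, hF⟩

/-- if the normal curvature of `Φ` along the orthogonal
trajectories of the curves of constant striction distance has the form
`f(u) w(u,v)ⁿ` (where `w u v = √(v² + δ u²)`), then either `f ≡ 0` and
`λ ≡ 0` (Φ is an orthoid), or `n = -3`, `δ' ≡ 0`, `kλ + 1 ≡ 0` and
`f = -δ²λ = δ²/k` (Φ is an Edlinger surface). -/
theorem normal_curvature_orthogonal_trajectories_striction
    (I : Set ℝ) (hIopen : IsOpen I) (hIconn : I.OrdConnected)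
    (k δ δ' lam : ℝ → ℝ)
    (hk : ContinuousOn k I)
    (hδdiff : ∀ u ∈ I, HasDerivAt δ (δ' u) u)
    (hδ'cont : ContinuousOn δ' I)
    (hδ0 : ∀ u ∈ I, δ u ≠ 0)
    (hlam : ContinuousOn lam I)
    (n : ℤ) (f : ℝ → ℝ) (hf : ContinuousOn f I)
    (hcond : ∀ u ∈ I, ∀ v : ℝ,
      f u * Real.sqrt (v ^ 2 + δ u ^ 2) ^ (n + 3) *
          (v ^ 2 + δ u ^ 2 * (lam u ^ 2 + 1)) +
        δ u ^ 2 * lam u *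
          ((k u * lam u + 2) * v ^ 2 + δ' u * lam u * v +
            δ u ^ 2 * (lam u ^ 2 + k u * lam u + 2)) = 0) :
    ((∀ u ∈ I, f u = 0) ∧ (∀ u ∈ I, lam u = 0)) ∨
    (n = -3 ∧ ∀ u ∈ I, δ' u = 0 ∧ k u * lam u + 1 = 0 ∧
      f u = -(δ u ^ 2) * lam u ∧ f u = δ u ^ 2 / k u) := by
  rcases I.eq_empty_or_nonempty with hI | ⟨u0, hu0⟩
  · left
    constructor <;> intro u hu <;> simp [hI] at hu
  have pt : ∀ u ∈ I, (lam u = 0 ∧ f u = 0) ∨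
      (lam u ≠ 0 ∧ n = -3 ∧ δ' u = 0 ∧ k u * lam u + 1 = 0 ∧
        f u = -(δ u ^ 2) * lam u ∧ f u = δ u ^ 2 / k u) := by
    intro u hu
    have ha : 0 < δ u ^ 2 := by
      have := hδ0 u hu
      positivity
    by_cases hL : lam u = 0
    · left
      refine ⟨hL, ?_⟩
      have h0 := hcond u hu 0
      rw [hL] at h0
      have hX : Real.sqrt ((0:ℝ) ^ 2 + δ u ^ 2) ^ (n + 3) ≠ 0 := by
        apply zpow_ne_zero
        have : (0:ℝ) ^ 2 + δ u ^ 2 = δ u ^ 2 := by ring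
        rw [this]
        exact ne_of_gt (Real.sqrt_pos.2 ha)
      have h1 : f u * (Real.sqrt ((0:ℝ) ^ 2 + δ u ^ 2) ^ (n + 3) * δ u ^ 2) = 0 := by
        linear_combination h0
      rcases mul_eq_zero.1 h1 with h | h
      · exact h
      · exact absurd h (mul_ne_zero hX ha.ne')
    · right
      obtain ⟨hm, hd, hk1, hF⟩ := pointwise_aux (n + 3) (δ u ^ 2) (lam u) (k u) (δ' u) (f u)
        ha hL (fun v => by linear_combination hcond u hu v)
      have hn : n = -3 := by omega
      have hkne : k u ≠ 0 := by
        intro h0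
        rw [h0] at hk1
        simp at hk1
      refine ⟨hL, hn, hd, hk1, by linarith [hF], ?_⟩
      rw [eq_div_iff hkne]
      linear_combination k u * hF - δ u ^ 2 * hk1
  set S : Set ℝ := I ∩ (fun u => k u * lam u + 1) ⁻¹' {0}ᶜ with hS
  set T : Set ℝ := I ∩ lam ⁻¹' {0}ᶜ with hT
  have hSopen : IsOpen S :=
    ((hk.mul hlam).add continuousOn_const).isOpen_inter_preimage hIopen isOpen_compl_singleton
  have hTopen : IsOpen T := hlam.isOpen_inter_preimage hIopen isOpen_compl_singleton
  have hdisj : Disjoint S T := by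
    rw [Set.disjoint_left]
    rintro u ⟨huI, hu1⟩ ⟨_, hu2⟩
    rcases pt u huI with ⟨h1, _⟩ | ⟨_, _, _, h2, _⟩
    · exact hu2 h1
    · exact hu1 h2
  have hcover : I ⊆ S ∪ T := by
    intro u hu
    by_cases hL : lam u = 0
    · left
      refine ⟨hu, ?_⟩
      simp [hL]
    · right
      exact ⟨hu, hL⟩
  rcases hIconn.isPreconnected.subset_or_subset hSopen hTopen hdisj hcover with hsub | hsub
  · left
    have hlam0 : ∀ u ∈ I, lam u = 0 := by
      intro u hu
      rcases pt u hu with ⟨h1, _⟩ | ⟨_, _, _, h2, _⟩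
      · exact h1
      · exact absurd h2 (hsub hu).2
    constructor
    · intro u hu
      rcases pt u hu with ⟨_, h1⟩ | ⟨h2, _⟩
      · exact h1
      · exact absurd (hlam0 u hu) h2
    · exact hlam0
  · right
    have hn : n = -3 := by
      rcases pt u0 hu0 with ⟨h1, _⟩ | ⟨_, hn, _⟩
      · exact absurd h1 (hsub hu0).2
      · exact hn
    refine ⟨hn, fun u hu => ?_⟩
    rcases pt u hu with ⟨h1, _⟩ | ⟨_, _, h2, h3, h4, h5⟩
    · exact absurd h1 (hsub hu).2
    · exact ⟨h2, h3, h4, h5⟩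
end

section
/- Suppose n ∈ ℤ with n ≠ −3, f : I → ℝ is continuous, and for all u ∈ I and v ∈ ℝ: f(u)·w(u,v)^{n+3}·(v² + δ(u)²(λ(u)²+1)) + δ(u)²λ(u)·((k(u)λ(u)+2)v² + δ'(u)λ(u)v + δ(u)²(λ(u)² + k(u)λ(u) + 2)) = 0. Then f ≡ 0 and λ ≡ 0 on I (Φ is an orthoid). -/
lemma orthoid_aux (n : ℤ) (hn : n ≠ -3) (c d D K l : ℝ) (hd : d ≠ 0)
    (h : ∀ v : ℝ, c * Real.sqrt (v ^ 2 + d ^ 2) ^ (n + 3) *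
          (v ^ 2 + d ^ 2 * (l ^ 2 + 1)) +
        d ^ 2 * l * ((K * l + 2) * v ^ 2 + D * l * v + d ^ 2 * (l ^ 2 + K * l + 2)) = 0) :
    c = 0 ∧ l = 0 := by
  have hd2 : (0:ℝ) < d ^ 2 := by positivity
  -- even part, in terms of t = v² + d²
  have heven : ∀ t : ℝ, d ^ 2 ≤ t →
      c * Real.sqrt t ^ (n + 3) * (t + d ^ 2 * l ^ 2) +
        (d ^ 2 * l * (K * l + 2) * t + d ^ 4 * l ^ 3) = 0 := by
    intro t ht
    have ht0 : 0 ≤ t - d ^ 2 := by linarith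
    set v := Real.sqrt (t - d ^ 2) with hvdef
    have hv2 : v ^ 2 = t - d ^ 2 := Real.sq_sqrt ht0
    have hvt : v ^ 2 + d ^ 2 = t := by linarith
    have h1 := h v
    have h2 := h (-v)
    rw [neg_sq] at h2
    rw [hvt] at h1 h2
    linear_combination h1 / 2 + h2 / 2 -
      (c * Real.sqrt t ^ (n + 3) + d ^ 2 * l * (K * l + 2)) * hv2
  -- quadratic relation from comparing t and 4t
  have hR : ∀ t : ℝ, d ^ 2 ≤ t →
      (2:ℝ) ^ (n + 3) * (4 * t + d ^ 2 * l ^ 2) * (d ^ 2 * l * (K * l + 2) * t + d ^ 4 * l ^ 3)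
        = (t + d ^ 2 * l ^ 2) * (d ^ 2 * l * (K * l + 2) * (4 * t) + d ^ 4 * l ^ 3) := by
    intro t ht
    have h1 := heven t ht
    have h2 := heven (4 * t) (by linarith)
    have hs : Real.sqrt (4 * t) = 2 * Real.sqrt t := by
      rw [show (4:ℝ) * t = 2 ^ 2 * t by ring, Real.sqrt_mul (by norm_num),
        Real.sqrt_sq (by norm_num)]
    rw [hs, mul_zpow] at h2
    linear_combination ((2:ℝ) ^ (n + 3)) * (4 * t + d ^ 2 * l ^ 2) * h1 -
      (t + d ^ 2 * l ^ 2) * h2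
  have R1 := hR (d ^ 2) le_rfl
  have R2 := hR (2 * d ^ 2) (by linarith)
  have R3 := hR (3 * d ^ 2) (by linarith)
  have hae : (d ^ 2 * l ^ 2) * (d ^ 4 * l ^ 3) * ((2:ℝ) ^ (n + 3) - 1) = 0 := by
    linear_combination 3 * R1 - 3 * R2 + R3
  have hq1 : ((2:ℝ) ^ (n + 3) - 1) ≠ 0 := by
    intro hq
    have h2 : (2:ℝ) ^ (n + 3) = (2:ℝ) ^ (0:ℤ) := by
      rw [zpow_zero]; linarith
    have := zpow_right_injective₀ (by norm_num : (0:ℝ) < 2) (by norm_num) h2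
    omega
  have hl : l = 0 := by
    by_contra hl
    exact (mul_ne_zero (mul_ne_zero
      (mul_ne_zero (pow_ne_zero _ hd) (pow_ne_zero _ hl))
      (mul_ne_zero (pow_ne_zero _ hd) (pow_ne_zero _ hl))) hq1) hae
  subst hl
  refine ⟨?_, rfl⟩
  have h1 := heven (d ^ 2) le_rfl
  rw [Real.sqrt_sq_eq_abs] at h1
  have hW : |d| ^ (n + 3) ≠ 0 := zpow_ne_zero _ (abs_ne_zero.mpr hd)
  have h1' : c * |d| ^ (n + 3) * d ^ 2 = 0 := by linear_combination h1
  rcases mul_eq_zero.mp h1' with h' | h'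
  · rcases mul_eq_zero.mp h' with h'' | h''
    · exact h''
    · exact absurd h'' hW
  · exact absurd h' (pow_ne_zero _ hd)

/-- if `n ≠ -3` and the normal curvature of `Φ` along the
orthogonal trajectories of the curves of constant striction distance has the
form `f(u) w(u,v)ⁿ` (where `w u v = √(v² + δ u²)`), then `f ≡ 0` and `λ ≡ 0`
on `I`, i.e. `Φ` is an orthoid. -/
theorem normal_curvature_orthogonal_trajectories_striction_n_ne_neg_three
    (I : Set ℝ) (hIopen : IsOpen I) (hIconn : I.OrdConnected)
    (k δ δ' lam : ℝ → ℝ)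
    (hk : ContinuousOn k I)
    (hδdiff : ∀ u ∈ I, HasDerivAt δ (δ' u) u)
    (hδ'cont : ContinuousOn δ' I)
    (hδ0 : ∀ u ∈ I, δ u ≠ 0)
    (hlam : ContinuousOn lam I)
    (n : ℤ) (hn : n ≠ -3) (f : ℝ → ℝ) (hf : ContinuousOn f I)
    (hcond : ∀ u ∈ I, ∀ v : ℝ,
      f u * Real.sqrt (v ^ 2 + δ u ^ 2) ^ (n + 3) *
          (v ^ 2 + δ u ^ 2 * (lam u ^ 2 + 1)) +
        δ u ^ 2 * lam u *
          ((k u * lam u + 2) * v ^ 2 + δ' u * lam u * v +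
            δ u ^ 2 * (lam u ^ 2 + k u * lam u + 2)) = 0) :
    (∀ u ∈ I, f u = 0) ∧ ∀ u ∈ I, lam u = 0 := by
  constructor
  · intro u hu
    exact (orthoid_aux n hn (f u) (δ u) (δ' u) (k u) (lam u) (hδ0 u hu) (hcond u hu)).1
  · intro u hu
    exact (orthoid_aux n hn (f u) (δ u) (δ' u) (k u) (lam u) (hδ0 u hu) (hcond u hu)).2
end

section
/- Suppose n ∈ ℤ, f : I → ℝ is continuous, and the normal curvature of Φ along the orthogonal trajectories of the generators has the form f(u)·w(u,v)ⁿ, i.e. for all u ∈ I and v ∈ ℝ: f(u)·w(u,v)^{n+3} + k(u)v² + δ'(u)v + δ(u)²(k(u)+λ(u)) = 0. Then one of the following holds: (a) f ≡ 0 and k ≡ δ' ≡ λ ≡ 0 on I (Φ is a helicoid); (b) n = −3, f(u) = −δ(u)²λ(u) for all u ∈ I, and k ≡ δ' ≡ 0 on I (Φ is a constantly dralled conoid); (c) n = −1, f(u) = −k(u) for all u ∈ I, and δ' ≡ λ ≡ 0 on I (Φ is a constantly dralled orthoid). -/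
/-- A quadratic vanishing on a ray has zero coefficients. -/
lemma quad_aux (A B w₀ : ℝ) (hw₀ : 0 < w₀)
    (h : ∀ w, w₀ ≤ w → A * w ^ 2 + B = 0) : A = 0 ∧ B = 0 := by
  have h1 := h w₀ le_rfl
  have h2 := h (w₀ + 1) (by linarith)
  constructor <;> nlinarith

/-- If `F w^m + a w² + e = 0` on a ray and `m ∉ {0,2}`, everything vanishes. -/
lemma keyother (m : ℤ) (hm0 : m ≠ 0) (hm2 : m ≠ 2) (F a e w₀ : ℝ) (hw₀ : 0 < w₀)
    (h : ∀ w, w₀ ≤ w → F * w ^ m + a * w ^ 2 + e = 0) :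
    F = 0 ∧ a = 0 ∧ e = 0 := by
  have hinj := zpow_right_injective₀ (a := (2:ℝ)) (by norm_num) (by norm_num)
  have h2m1 : (2:ℝ) ^ m ≠ 1 := by
    intro hc
    exact hm0 (hinj (by simpa using hc))
  have h2m4 : (2:ℝ) ^ m ≠ 4 := by
    intro hc
    have h4 : ((2:ℝ) ^ m) = (2:ℝ) ^ (2:ℤ) := by norm_num [hc]
    exact hm2 (hinj h4)
  have key : ∀ w, w₀ ≤ w → ((4 - 2 ^ m) * a) * w ^ 2 + ((1 - 2 ^ m) * e) = 0 := by
    intro w hw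
    have h1 := h w hw
    have h2 := h (2 * w) (by nlinarith)
    rw [mul_zpow] at h2
    linear_combination h2 - (2:ℝ) ^ m * h1
  obtain ⟨hA, hB⟩ := quad_aux _ _ _ hw₀ key
  have ha : a = 0 := by
    rcases mul_eq_zero.mp hA with h' | h'
    · exact absurd (by linarith : (2:ℝ)^m = 4) h2m4
    · exact h'
  have he : e = 0 := by
    rcases mul_eq_zero.mp hB with h' | h'
    · exact absurd (by linarith : (2:ℝ)^m = 1) h2m1
    · exact h'
  refine ⟨?_, ha, he⟩
  have h1 := h w₀ le_rfl
  rw [ha, he] at h1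
  have hpow : w₀ ^ m ≠ 0 := zpow_ne_zero _ (ne_of_gt hw₀)
  have : F * w₀ ^ m = 0 := by linarith
  exact (mul_eq_zero.mp this).resolve_right hpow

/-- if the normal curvature of `Φ` along the orthogonal
trajectories of the generators has the form `f(u) w(u,v)ⁿ`
(where `w u v = √(v² + δ u²)`), then either `f ≡ 0` and `Φ` is a helicoid,
or `n = -3`, `f = -δ²λ` and `Φ` is a constantly dralled conoid
(`k ≡ δ' ≡ 0`), or `n = -1`, `f = -k` and `Φ` is a constantly dralled
orthoid (`δ' ≡ λ ≡ 0`). -/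
theorem normal_curvature_orthogonal_trajectories_generators
    (I : Set ℝ) (hIopen : IsOpen I) (hIconn : I.OrdConnected)
    (k δ δ' lam : ℝ → ℝ)
    (hk : ContinuousOn k I)
    (hδdiff : ∀ u ∈ I, HasDerivAt δ (δ' u) u)
    (hδ'cont : ContinuousOn δ' I)
    (hδ0 : ∀ u ∈ I, δ u ≠ 0)
    (hlam : ContinuousOn lam I)
    (n : ℤ) (f : ℝ → ℝ) (hf : ContinuousOn f I)
    (hcond : ∀ u ∈ I, ∀ v : ℝ,
      f u * Real.sqrt (v ^ 2 + δ u ^ 2) ^ (n + 3) +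
        k u * v ^ 2 + δ' u * v + δ u ^ 2 * (k u + lam u) = 0) :
    ((∀ u ∈ I, f u = 0) ∧ (∀ u ∈ I, k u = 0 ∧ δ' u = 0 ∧ lam u = 0)) ∨
    (n = -3 ∧ (∀ u ∈ I, f u = -(δ u ^ 2) * lam u) ∧
      (∀ u ∈ I, k u = 0 ∧ δ' u = 0)) ∨
    (n = -1 ∧ (∀ u ∈ I, f u = -k u) ∧
      (∀ u ∈ I, δ' u = 0 ∧ lam u = 0)) := by
  -- Step 1: δ' ≡ 0 (evenness of w in v).
  have hb : ∀ u ∈ I, δ' u = 0 := by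
    intro u hu
    have h1 := hcond u hu 1
    have h2 := hcond u hu (-1)
    have he : ((-1:ℝ)) ^ 2 = (1:ℝ) ^ 2 := by norm_num
    rw [he] at h2
    linarith
  -- Step 2: reformulate as identity in w on a ray.
  have hw : ∀ u ∈ I, ∀ w, |δ u| + 1 ≤ w →
      f u * w ^ (n + 3) + k u * w ^ 2 +
        (δ u ^ 2 * (k u + lam u) - k u * δ u ^ 2) = 0 := by
    intro u hu w hwge
    have hc : |δ u| ≤ w := by linarith
    have hw0 : 0 ≤ w := le_trans (abs_nonneg _) hc
    have hsq : δ u ^ 2 ≤ w ^ 2 := by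
      have := sq_abs (δ u)
      nlinarith [abs_nonneg (δ u)]
    have hvsq : (Real.sqrt (w ^ 2 - δ u ^ 2)) ^ 2 = w ^ 2 - δ u ^ 2 :=
      Real.sq_sqrt (by linarith)
    have h := hcond u hu (Real.sqrt (w ^ 2 - δ u ^ 2))
    rw [hvsq] at h
    have harg : w ^ 2 - δ u ^ 2 + δ u ^ 2 = w ^ 2 := by ring
    rw [harg, Real.sqrt_sq hw0, hb u hu] at h
    linear_combination h
  have hw₀pos : ∀ u : ℝ, 0 < |δ u| + 1 := by
    intro u; have := abs_nonneg (δ u); linarith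
  by_cases hn3 : n = -3
  · -- conoid case
    subst hn3
    right; left
    have hpt : ∀ u ∈ I, k u = 0 ∧ f u = -(δ u ^ 2) * lam u := by
      intro u hu
      have h' : ∀ w, |δ u| + 1 ≤ w →
          k u * w ^ 2 + (f u + (δ u ^ 2 * (k u + lam u) - k u * δ u ^ 2)) = 0 := by
        intro w hwge
        have h := hw u hu w hwge
        have : ((-3 : ℤ) + 3) = 0 := by norm_num
        rw [this, zpow_zero] at h
        linarith
      obtain ⟨hA, hB⟩ := quad_aux _ _ _ (hw₀pos u) h'
      refine ⟨hA, ?_⟩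
      rw [hA] at hB
      linarith [hB]
    exact ⟨rfl, fun u hu => (hpt u hu).2, fun u hu => ⟨(hpt u hu).1, hb u hu⟩⟩
  · by_cases hn1 : n = -1
    · -- orthoid case
      subst hn1
      right; right
      have hpt : ∀ u ∈ I, f u = -k u ∧ lam u = 0 := by
        intro u hu
        have h' : ∀ w, |δ u| + 1 ≤ w →
            (f u + k u) * w ^ 2 + (δ u ^ 2 * (k u + lam u) - k u * δ u ^ 2) = 0 := by
          intro w hwge
          have h := hw u hu w hwge
          rw [show ((-1 : ℤ) + 3) = ((2:ℕ):ℤ) from by norm_num, zpow_natCast] at h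
          linarith
        obtain ⟨hA, hB⟩ := quad_aux _ _ _ (hw₀pos u) h'
        have hδsq : δ u ^ 2 ≠ 0 := pow_ne_zero _ (hδ0 u hu)
        have hlam0 : lam u = 0 := by
          have : δ u ^ 2 * lam u = 0 := by linarith
          exact (mul_eq_zero.mp this).resolve_left hδsq
        exact ⟨by linarith, hlam0⟩
      exact ⟨rfl, fun u hu => (hpt u hu).1, fun u hu => ⟨hb u hu, (hpt u hu).2⟩⟩
    · -- helicoid case
      left
      have hpt : ∀ u ∈ I, f u = 0 ∧ k u = 0 ∧ lam u = 0 := by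
        intro u hu
        have hm0 : n + 3 ≠ 0 := by omega
        have hm2 : n + 3 ≠ 2 := by omega
        obtain ⟨hF, ha, he⟩ := keyother (n + 3) hm0 hm2 _ _ _ _ (hw₀pos u) (hw u hu)
        have hδsq : δ u ^ 2 ≠ 0 := pow_ne_zero _ (hδ0 u hu)
        have hlam0 : lam u = 0 := by
          have : δ u ^ 2 * lam u = 0 := by linarith
          exact (mul_eq_zero.mp this).resolve_left hδsq
        exact ⟨hF, ha, hlam0⟩
      exact ⟨fun u hu => (hpt u hu).1,
        fun u hu => ⟨(hpt u hu).2.1, hb u hu, (hpt u hu).2.2⟩⟩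
end

section
/- Suppose f : I → ℝ is continuous and for all u ∈ I and v ∈ ℝ: f(u)·w(u,v) + k(u)v² + δ'(u)v + δ(u)²(k(u)+λ(u)) = 0 (i.e. the normal curvature along the orthogonal trajectories of the generators has the form f(u)·w(u,v)^{−2}). Then f ≡ 0 on I, and consequently k ≡ δ' ≡ λ ≡ 0 on I. -/
/-- if the normal curvature of `Φ` along the orthogonal
trajectories of the generators has the form `f(u) w(u,v)⁻²`
(where `w u v = √(v² + δ u²)`), i.e.
`f(u) w(u,v) + k(u)v² + δ'(u)v + δ(u)²(k(u)+λ(u)) = 0` identically,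
then `f ≡ 0` on `I` and consequently `k ≡ δ' ≡ λ ≡ 0` on `I`. -/
theorem normal_curvature_orthogonal_trajectories_generators_n_neg_two
    (I : Set ℝ) (hIopen : IsOpen I) (hIconn : I.OrdConnected)
    (k δ δ' lam : ℝ → ℝ)
    (hk : ContinuousOn k I)
    (hδdiff : ∀ u ∈ I, HasDerivAt δ (δ' u) u)
    (hδ'cont : ContinuousOn δ' I)
    (hδ0 : ∀ u ∈ I, δ u ≠ 0)
    (hlam : ContinuousOn lam I)
    (f : ℝ → ℝ) (hf : ContinuousOn f I)
    (hcond : ∀ u ∈ I, ∀ v : ℝ,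
      f u * Real.sqrt (v ^ 2 + δ u ^ 2) +
        k u * v ^ 2 + δ' u * v + δ u ^ 2 * (k u + lam u) = 0) :
    (∀ u ∈ I, f u = 0) ∧ ∀ u ∈ I, k u = 0 ∧ δ' u = 0 ∧ lam u = 0 := by
  have key : ∀ u ∈ I, f u = 0 ∧ (k u = 0 ∧ δ' u = 0 ∧ lam u = 0) := by
    intro u hu
    set c : ℝ := δ u ^ 2 with hc
    have hcpos : 0 < c := by
      have := hδ0 u hu
      positivity
    have hdpos : 0 < Real.sqrt c := Real.sqrt_pos.mpr hcpos
    have hsq : Real.sqrt c ^ 2 = c := Real.sq_sqrt hcpos.le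
    -- δ' = 0 from v = 1 and v = -1
    have h1 := hcond u hu 1
    have h1' := hcond u hu (-1)
    have hδ'0 : δ' u = 0 := by
      have e : ((-1 : ℝ)) ^ 2 = (1 : ℝ) ^ 2 := by norm_num
      rw [e] at h1'
      linarith
    -- v = 0
    have h0 := hcond u hu 0
    have e0 : Real.sqrt ((0 : ℝ) ^ 2 + c) = Real.sqrt c := by norm_num
    rw [e0] at h0
    -- v = √(3c)
    have h3 := hcond u hu (Real.sqrt (3 * c))
    have e3 : Real.sqrt (3 * c) ^ 2 = 3 * c := Real.sq_sqrt (by linarith)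
    have e3' : Real.sqrt (3 * c + c) = 2 * Real.sqrt c := by
      rw [show (3 * c + c : ℝ) = (2 * Real.sqrt c) ^ 2 by
        rw [mul_pow, hsq]; ring]
      exact Real.sqrt_sq (by positivity)
    rw [e3, e3'] at h3
    -- v = √(8c)
    have h8 := hcond u hu (Real.sqrt (8 * c))
    have e8 : Real.sqrt (8 * c) ^ 2 = 8 * c := Real.sq_sqrt (by linarith)
    have e8' : Real.sqrt (8 * c + c) = 3 * Real.sqrt c := by
      rw [show (8 * c + c : ℝ) = (3 * Real.sqrt c) ^ 2 by
        rw [mul_pow, hsq]; ring]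
      exact Real.sqrt_sq (by positivity)
    rw [e8, e8'] at h8
    rw [hδ'0] at h3 h8
    -- From h0, h3, h8 derive c * k u = 0 and f u * √c = 0
    have hck : c * k u = 0 := by nlinarith [h0, h3, h8]
    have hk0 : k u = 0 := by
      rcases mul_eq_zero.mp hck with h | h
      · exact absurd h (ne_of_gt hcpos)
      · exact h
    have hf0 : f u = 0 := by
      have hfs : f u * Real.sqrt c = 0 := by nlinarith [h0, h3]
      rcases mul_eq_zero.mp hfs with h | h
      · exact h
      · exact absurd h (ne_of_gt hdpos)
    have hlam0 : lam u = 0 := by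
      rw [hf0, hk0] at h0
      have : c * lam u = 0 := by rw [hc]; linarith
      rcases mul_eq_zero.mp this with h | h
      · exact absurd h (ne_of_gt hcpos)
      · exact h
    exact ⟨hf0, hk0, hδ'0, hlam0⟩
  exact ⟨fun u hu => (key u hu).1, fun u hu => (key u hu).2⟩
end

section
/- Suppose n ∈ ℤ, f : I → ℝ is continuous, and the normal curvature of Φ along the curves of constant Gaussian curvature has the form f(u)·w(u,v)ⁿ, i.e. for all u ∈ I and v ∈ ℝ: f(u)·w(u,v)^{n+1}·A(u,v) + 4δ(u)²·v·(k(u)v³ + δ(u)²(k(u)−λ(u))v + δ(u)²δ'(u)) = 0, where A(u,v) = (4δ² + δ'²)v⁴ + 4δ²δ'λ v³ + 2δ²(2δ²(λ²+1) − δ'²)v² − 4δ⁴δ'λ v + δ⁴δ'². Then either (a) f ≡ 0 and k ≡ δ' ≡ λ ≡ 0 on I (Φ is a helicoid), or (b) n = −1, f(u) = −k(u) and δ'(u) = 0 for all u ∈ I, and moreover λ ≡ 0 on I or kλ + 1 ≡ 0 on I (Φ is a constantly dralled orthoid or an Edlinger surface). -/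
private lemma cancel_ne {x y : ℝ} (hx : x ≠ 0) (h : x * y = 0) : y = 0 :=
  (mul_eq_zero.mp h).resolve_left hx

/-- If `α t² + β = 0` for all `t > T` (with `T > 0`), then `α = β = 0`. -/
private lemma quad_aux_s15 {T α β : ℝ} (hT : 0 < T)
    (h : ∀ t : ℝ, T < t → α * t ^ 2 + β = 0) : α = 0 ∧ β = 0 := by
  have h1 := h (T + 1) (by linarith)
  have h2 := h (2 * (T + 1)) (by linarith)
  have key : α * (3 * (T + 1) ^ 2) = 0 := by linear_combination h2 - h1
  have hα : α = 0 := by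
    have h3 : (3 * (T + 1) ^ 2 : ℝ) ≠ 0 := by positivity
    exact (mul_eq_zero.mp key).resolve_right h3
  refine ⟨hα, ?_⟩
  rw [hα] at h1
  linarith

/-- Core algebraic lemma: if `F tᵐ (t² + B) + c t² - D = 0` for all `t > T > 0`
with `F ≠ 0` (and `B = 0 → D = 0`), then `m = 0`, `F + c = 0` and `F B = D`. -/
private lemma lemB {F B c D T : ℝ} {m : ℤ} (hT : 0 < T) (hF : F ≠ 0)
    (hBD : B = 0 → D = 0)
    (h : ∀ t : ℝ, T < t → F * t ^ m * (t ^ 2 + B) + c * t ^ 2 - D = 0) :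
    m = 0 ∧ F + c = 0 ∧ F * B = D := by
  set x : ℝ := (2 : ℝ) ^ m with hx
  have hx0 : 0 < x := zpow_pos (by norm_num) m
  have hquad : ∀ t : ℝ, T < t →
      (16 * x ^ 2 - 20 * x + 4) * t ^ 2 + (x ^ 2 - 5 * x + 4) * B = 0 := by
    intro t ht
    have ht0 : 0 < t := hT.trans ht
    have htm : (t : ℝ) ^ m ≠ 0 := zpow_ne_zero _ (ne_of_gt ht0)
    have h1 := h t ht
    have h2 := h (2 * t) (by linarith)
    have h3 := h (4 * t) (by linarith)
    have e2 : (2 * t) ^ m = x * t ^ m := by rw [mul_zpow, hx]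
    have e3 : (4 * t) ^ m = x * x * t ^ m := by
      rw [show (4 : ℝ) * t = 2 * (2 * t) by ring, mul_zpow, e2, hx]; ring
    rw [e2] at h2
    rw [e3] at h3
    have key : F * t ^ m *
        ((16 * x ^ 2 - 20 * x + 4) * t ^ 2 + (x ^ 2 - 5 * x + 4) * B) = 0 := by
      linear_combination h3 - 5 * h2 + 4 * h1
    exact cancel_ne (mul_ne_zero hF htm) key
  obtain ⟨hα, hβ⟩ := quad_aux_s15 hT hquad
  have hfac : (x - 1) * (4 * x - 1) = 0 := by linear_combination hα / 4
  rcases mul_eq_zero.mp hfac with h1 | h1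
  · -- x = 1, i.e. m = 0
    have hm : m = 0 := by
      have hx1 : (2 : ℝ) ^ m = 1 := by rw [← hx]; linarith
      exact (zpow_eq_one_iff_right₀ (by norm_num) (by norm_num)).mp hx1
    subst hm
    refine ⟨rfl, ?_⟩
    have h0 : ∀ t : ℝ, T < t → (F + c) * t ^ 2 + (F * B - D) = 0 := by
      intro t ht
      have h1 := h t ht
      rw [zpow_zero] at h1
      linear_combination h1
    obtain ⟨e1, e2⟩ := quad_aux_s15 hT h0
    exact ⟨e1, by linarith⟩
  · -- x = 1/4 : contradiction
    exfalso
    have hx4 : x = 1 / 4 := by linarith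
    have hcoef : x ^ 2 - 5 * x + 4 ≠ 0 := by rw [hx4]; norm_num
    have hB : B = 0 := cancel_ne hcoef hβ
    have hD : D = 0 := hBD hB
    have h1 := h (T + 1) (by linarith)
    have h2 := h (2 * (T + 1)) (by linarith)
    have e2 : (2 * (T + 1)) ^ m = x * (T + 1) ^ m := by rw [mul_zpow, hx]
    rw [e2, hB, hD] at h2
    rw [hB, hD] at h1
    have key : F * (T + 1) ^ m * ((4 - 4 * x) * (T + 1) ^ 2) = 0 := by
      linear_combination 4 * h1 - h2
    have hne : ((4 - 4 * x) * (T + 1) ^ 2 : ℝ) ≠ 0 := by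
      rw [hx4]; positivity
    have := cancel_ne (mul_ne_zero hF (zpow_ne_zero _ (by positivity : (T + 1 : ℝ) ≠ 0))) key
    · exact hne this
  -- done

/-- Pointwise analysis of the functional equation at a fixed parameter. -/
private lemma pointwise {a b c l F : ℝ} {m : ℤ} (ha : a ≠ 0)
    (h : ∀ v : ℝ, F * Real.sqrt (v ^ 2 + a ^ 2) ^ m *
          ((4 * a ^ 2 + b ^ 2) * v ^ 4 +
            4 * a ^ 2 * b * l * v ^ 3 +
            2 * a ^ 2 * (2 * a ^ 2 * (l ^ 2 + 1) - b ^ 2) * v ^ 2 -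
            4 * a ^ 4 * b * l * v + a ^ 4 * b ^ 2) +
        4 * a ^ 2 * v *
          (c * v ^ 3 + a ^ 2 * (c - l) * v + a ^ 2 * b) = 0) :
    (F = 0 ∧ c = 0 ∧ b = 0 ∧ l = 0) ∨
    (F ≠ 0 ∧ m = 0 ∧ F = -c ∧ b = 0 ∧ l * (c * l + 1) = 0) := by
  have ha2 : (0 : ℝ) < a ^ 2 := by positivity
  by_cases hF : F = 0
  · -- helicoid case
    left
    subst hF
    have h' : ∀ v : ℝ, 4 * a ^ 2 * v *
        (c * v ^ 3 + a ^ 2 * (c - l) * v + a ^ 2 * b) = 0 := by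
      intro v
      linear_combination h v
    have key : (8 * a ^ 4 : ℝ) * b = 0 := by linear_combination h' 1 - h' (-1)
    have hb : b = 0 := cancel_ne (by positivity) key
    have key1 : (4 * a ^ 2 : ℝ) * (c + a ^ 2 * (c - l)) = 0 := by
      linear_combination h' 1 - 4 * a ^ 4 * hb
    have hq1 : c + a ^ 2 * (c - l) = 0 := cancel_ne (by positivity) key1
    have key2 : (8 * a ^ 2 : ℝ) * (8 * c + 2 * a ^ 2 * (c - l)) = 0 := by
      linear_combination h' 2 - 8 * a ^ 4 * hb
    have hq2 : 8 * c + 2 * a ^ 2 * (c - l) = 0 := cancel_ne (by positivity) key2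
    have hc : c = 0 := by linarith
    have hl : l = 0 := by
      have keyl : (a ^ 2 : ℝ) * l = 0 := by linear_combination (1 + a ^ 2) * hc - hq1
      exact cancel_ne (ne_of_gt ha2) keyl
    exact ⟨rfl, hc, hb, hl⟩
  · -- f ≠ 0 case
    right
    -- first: b = 0, from v = 0
    have hsa : Real.sqrt (a ^ 2) ≠ 0 := by
      rw [Real.sqrt_sq_eq_abs]; exact abs_ne_zero.mpr ha
    have h0 := h 0
    rw [show (0 : ℝ) ^ 2 + a ^ 2 = a ^ 2 by ring] at h0
    have key0 : F * Real.sqrt (a ^ 2) ^ m * (a ^ 4 * b ^ 2) = 0 := by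
      linear_combination h0
    have hb : b = 0 := by
      have h1 : a ^ 4 * b ^ 2 = 0 :=
        cancel_ne (mul_ne_zero hF (zpow_ne_zero _ hsa)) key0
      have h2 : b ^ 2 = 0 := cancel_ne (by positivity) h1
      exact pow_eq_zero_iff (n := 2) (by norm_num) |>.mp h2
    subst hb
    -- the reduced identity in t = w
    have star : ∀ t : ℝ, |a| < t →
        F * t ^ m * (t ^ 2 + a ^ 2 * l ^ 2) + c * t ^ 2 - a ^ 2 * l = 0 := by
      intro t ht
      have ht0 : 0 < t := (abs_nonneg a).trans_lt ht
      have hta : a ^ 2 < t ^ 2 := by nlinarith [sq_abs a, abs_nonneg a]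
      set v := Real.sqrt (t ^ 2 - a ^ 2) with hv
      have hv2 : v ^ 2 = t ^ 2 - a ^ 2 := Real.sq_sqrt (by linarith)
      have hvpos : 0 < v := Real.sqrt_pos.mpr (by linarith)
      have hw : Real.sqrt (v ^ 2 + a ^ 2) = t := by
        rw [hv2, show t ^ 2 - a ^ 2 + a ^ 2 = t ^ 2 by ring]
        exact Real.sqrt_sq ht0.le
      have hh := h v
      rw [hw] at hh
      have key : 4 * a ^ 2 * v ^ 2 *
          (F * t ^ m * (t ^ 2 + a ^ 2 * l ^ 2) + c * t ^ 2 - a ^ 2 * l) = 0 := by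
        linear_combination hh - 4 * a ^ 2 * v ^ 2 * (F * t ^ m + c) * hv2
      exact cancel_ne (by positivity) key
    have hBD : a ^ 2 * l ^ 2 = 0 → a ^ 2 * l = 0 := by
      intro hB
      have hl2 : l ^ 2 = 0 := cancel_ne (ne_of_gt ha2) hB
      have hl : l = 0 := pow_eq_zero_iff (n := 2) (by norm_num) |>.mp hl2
      rw [hl, mul_zero]
    obtain ⟨hm, hFc, hFB⟩ := lemB (abs_pos.mpr ha) hF hBD star
    refine ⟨hF, hm, by linarith, rfl, ?_⟩
    have key : (a ^ 2 : ℝ) * (l * (c * l + 1)) = 0 := by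
      linear_combination (a ^ 2 * l ^ 2) * hFc - hFB
    exact cancel_ne (ne_of_gt ha2) key

/-- if the normal curvature of `Φ` along the curves of constant
Gaussian curvature has the form `f(u) w(u,v)ⁿ` (where `w u v = √(v² + δ u²)`
and `A` is the quartic from the text), then either `f ≡ 0` and `Φ` is a
helicoid, or `n = -1`, `f = -k`, `δ' ≡ 0`, and `Φ` is a constantly dralled
orthoid (`λ ≡ 0`) or an Edlinger surface (`kλ + 1 ≡ 0`). -/
theorem normal_curvature_constant_gaussian_curvature
    (I : Set ℝ) (hIopen : IsOpen I) (hIconn : I.OrdConnected)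
    (k δ δ' lam : ℝ → ℝ)
    (hk : ContinuousOn k I)
    (hδdiff : ∀ u ∈ I, HasDerivAt δ (δ' u) u)
    (hδ'cont : ContinuousOn δ' I)
    (hδ0 : ∀ u ∈ I, δ u ≠ 0)
    (hlam : ContinuousOn lam I)
    (n : ℤ) (f : ℝ → ℝ) (hf : ContinuousOn f I)
    (hcond : ∀ u ∈ I, ∀ v : ℝ,
      f u * Real.sqrt (v ^ 2 + δ u ^ 2) ^ (n + 1) *
          ((4 * δ u ^ 2 + δ' u ^ 2) * v ^ 4 +
            4 * δ u ^ 2 * δ' u * lam u * v ^ 3 +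
            2 * δ u ^ 2 * (2 * δ u ^ 2 * (lam u ^ 2 + 1) - δ' u ^ 2) * v ^ 2 -
            4 * δ u ^ 4 * δ' u * lam u * v + δ u ^ 4 * δ' u ^ 2) +
        4 * δ u ^ 2 * v *
          (k u * v ^ 3 + δ u ^ 2 * (k u - lam u) * v + δ u ^ 2 * δ' u) = 0) :
    ((∀ u ∈ I, f u = 0) ∧ (∀ u ∈ I, k u = 0 ∧ δ' u = 0 ∧ lam u = 0)) ∨
    (n = -1 ∧ (∀ u ∈ I, f u = -k u ∧ δ' u = 0) ∧
      ((∀ u ∈ I, lam u = 0) ∨ (∀ u ∈ I, k u * lam u + 1 = 0))) := by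
  have key : ∀ u ∈ I,
      (f u = 0 ∧ k u = 0 ∧ δ' u = 0 ∧ lam u = 0) ∨
      (f u ≠ 0 ∧ n + 1 = 0 ∧ f u = -(k u) ∧ δ' u = 0 ∧
        lam u * (k u * lam u + 1) = 0) := by
    intro u hu
    exact pointwise (hδ0 u hu) (hcond u hu)
  by_cases hf0 : ∀ u ∈ I, f u = 0
  · left
    refine ⟨hf0, fun u hu => ?_⟩
    rcases key u hu with h | h
    · exact ⟨h.2.1, h.2.2.1, h.2.2.2⟩
    · exact absurd (hf0 u hu) h.1
  · right
    push_neg at hf0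
    obtain ⟨u₀, hu₀, hfu₀⟩ := hf0
    have hn : n = -1 := by
      rcases key u₀ hu₀ with h | h
      · exact absurd h.1 hfu₀
      · omega
    have hl : ∀ u ∈ I, lam u * (k u * lam u + 1) = 0 := by
      intro u hu
      rcases key u hu with h | h
      · rw [h.2.2.2]; ring
      · exact h.2.2.2.2
    refine ⟨hn, fun u hu => ?_, ?_⟩
    · rcases key u hu with h | h
      · exact ⟨by rw [h.1, h.2.1]; ring, h.2.2.1⟩
      · exact ⟨h.2.2.1, h.2.2.2.1⟩
    · -- connectedness argument
      have hpre : IsPreconnected I := hIconn.isPreconnected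
      have hUopen : IsOpen (I ∩ lam ⁻¹' {(0 : ℝ)}ᶜ) :=
        hlam.isOpen_inter_preimage hIopen isOpen_compl_singleton
      have hVopen :
          IsOpen (I ∩ (fun u => k u * lam u + 1) ⁻¹' {(0 : ℝ)}ᶜ) :=
        ((hk.mul hlam).add continuousOn_const).isOpen_inter_preimage hIopen
          isOpen_compl_singleton
      have hdisj : Disjoint (I ∩ lam ⁻¹' {(0 : ℝ)}ᶜ)
          (I ∩ (fun u => k u * lam u + 1) ⁻¹' {(0 : ℝ)}ᶜ) := by
        rw [Set.disjoint_left]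
        rintro u ⟨hu, hlu⟩ ⟨-, hku⟩
        rcases mul_eq_zero.mp (hl u hu) with h | h
        · exact hlu h
        · exact hku h
      have hcover : I ⊆ (I ∩ lam ⁻¹' {(0 : ℝ)}ᶜ) ∪
          (I ∩ (fun u => k u * lam u + 1) ⁻¹' {(0 : ℝ)}ᶜ) := by
        intro u hu
        rcases mul_eq_zero.mp (hl u hu) with h | h
        · right
          refine ⟨hu, ?_⟩
          simp only [Set.mem_preimage, Set.mem_compl_iff, Set.mem_singleton_iff]
          rw [h]; norm_num
        · left
          refine ⟨hu, ?_⟩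
          simp only [Set.mem_preimage, Set.mem_compl_iff, Set.mem_singleton_iff]
          intro hl0
          rw [hl0] at h
          norm_num at h
      rcases hpre.subset_or_subset hUopen hVopen hdisj hcover with hsub | hsub
      · right
        intro u hu
        have hlu : lam u ≠ 0 := (hsub hu).2
        exact (mul_eq_zero.mp (hl u hu)).resolve_left hlu
      · left
        intro u hu
        have hku : k u * lam u + 1 ≠ 0 := (hsub hu).2
        exact (mul_eq_zero.mp (hl u hu)).resolve_right hku
end

section
/- Suppose Φ is an Edlinger surface, i.e. δ'(u) = 0 and k(u)λ(u) + 1 = 0 for all u ∈ I (so k(u) ≠ 0 for all u). Then for every (u,v) ∈ I × ℝ both the direction (du, dv) = (1, 0) (tangent to the curves of constant striction distance) and the direction (du, dv) = (δ(u)k(u), k(u)²v² + δ(u)²(k(u)²+1)) satisfy the lines-of-curvature equation (g₁₁h₁₂ − g₁₂h₁₁)du² + (g₁₁h₂₂ − g₂₂h₁₁)du·dv + (g₁₂h₂₂ − g₂₂h₁₂)dv² = 0; in particular the curves v = const are lines of curvature of Φ. -/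
/-- on an Edlinger surface (`δ' ≡ 0`, `kλ + 1 ≡ 0` on `I`), for
every `(u,v)` both the direction `(du, dv) = (1, 0)` (tangent to the curves of
constant striction distance) and the direction
`(du, dv) = (δ(u)k(u), k(u)²v² + δ(u)²(k(u)²+1))` satisfy the
lines-of-curvature equation
`(g₁₁h₁₂ − g₁₂h₁₁)du² + (g₁₁h₂₂ − g₂₂h₁₁)du dv + (g₁₂h₂₂ − g₂₂h₁₂)dv² = 0`,
where `g₁₁ = v² + δ²(λ²+1)`, `g₁₂ = δλ`, `g₂₂ = 1`,
`h₁₁ = −(kv² + δ'v + δ²(k−λ))/w`, `h₁₂ = δ/w`, `h₂₂ = 0`, and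
`w u v = √(v² + δ u²)`.  In particular the curves `v = const` are lines of
curvature of `Φ`. -/
theorem edlinger_lines_of_curvature
    (I : Set ℝ) (hIopen : IsOpen I) (hIconn : I.OrdConnected)
    (k δ δ' lam : ℝ → ℝ)
    (hk : ContinuousOn k I)
    (hδdiff : ∀ u ∈ I, HasDerivAt δ (δ' u) u)
    (hδ'cont : ContinuousOn δ' I)
    (hδ0 : ∀ u ∈ I, δ u ≠ 0)
    (hlam : ContinuousOn lam I)
    (hEdl : ∀ u ∈ I, δ' u = 0 ∧ k u * lam u + 1 = 0) :
    ∀ u ∈ I, ∀ v : ℝ, ∀ du dv : ℝ,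
      ((du, dv) = (1, 0) ∨
        (du, dv) = (δ u * k u, k u ^ 2 * v ^ 2 + δ u ^ 2 * (k u ^ 2 + 1))) →
      ((v ^ 2 + δ u ^ 2 * (lam u ^ 2 + 1)) *
            (δ u / Real.sqrt (v ^ 2 + δ u ^ 2)) -
          (δ u * lam u) *
            (-(k u * v ^ 2 + δ' u * v + δ u ^ 2 * (k u - lam u)) /
              Real.sqrt (v ^ 2 + δ u ^ 2))) * du ^ 2 +
        ((v ^ 2 + δ u ^ 2 * (lam u ^ 2 + 1)) * 0 -
          1 * (-(k u * v ^ 2 + δ' u * v + δ u ^ 2 * (k u - lam u)) /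
              Real.sqrt (v ^ 2 + δ u ^ 2))) * (du * dv) +
        ((δ u * lam u) * 0 -
          1 * (δ u / Real.sqrt (v ^ 2 + δ u ^ 2))) * dv ^ 2 = 0 := by
  intro u hu v du dv h
  have hδu := hδ0 u hu
  obtain ⟨hd0, hkl⟩ := hEdl u hu
  have hk0 : k u ≠ 0 := by
    intro h0; rw [h0] at hkl; simp at hkl
  have hlamu : lam u = -1 / k u := by field_simp; linarith
  have hW : Real.sqrt (v ^ 2 + δ u ^ 2) ≠ 0 := by
    have : (0:ℝ) < v ^ 2 + δ u ^ 2 := by positivity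
    exact ne_of_gt (Real.sqrt_pos.mpr this)
  rcases h with h | h <;> obtain ⟨h1, h2⟩ := Prod.mk.injEq .. ▸ h <;>
    subst h1 h2 <;> rw [hd0, hlamu] <;> field_simp <;> ring
end
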